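/- arXiv:2107.00981 — 7 statements merged into one kernel-verified Lean document; each statement's English description precedes it below -/
import Mathlib

section
/- Let K be a field and let a ∈ K with a ≠ 0 and a ≠ 1. The hexagon H(a) has exactly one element if and only if a = −1 and 1 + 1 + 1 = 0 in K (i.e., K has characteristic 3). -/
/-- The hexagon of an element `a` of a field `K`: the orbit of `a` under the
anharmonic group action generated by `a ↦ 1 - a` and `a ↦ a⁻¹`. -/
def hexagon {K : Type*} [Field K] (a : K) : Set K :=
  {a, 1 - a, a⁻¹, (1 - a)⁻¹, (a - 1) * a⁻¹, a * (a - 1)⁻¹}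

/-- The hexagon of `a` has exactly one element (ternary type) if and only if
`a = -1` and `1 + 1 + 1 = 0` in `K`. -/
theorem hexagon_ncard_eq_one_iff {K : Type*} [Field K] (a : K) (h0 : a ≠ 0) (h1 : a ≠ 1) :
    (hexagon a).ncard = 1 ↔ a = -1 ∧ (1 + 1 + 1 : K) = 0 := by
  rw [Set.ncard_eq_one]
  constructor
  · rintro ⟨x, hx⟩
    have ha : a ∈ hexagon a := by left; rfl
    have hsub : a = x := by rw [hx] at ha; exact ha
    subst hsub
    have h2 : (1 - a) ∈ hexagon a := by right; left; rfl
    have h3 : a⁻¹ ∈ hexagon a := by right; right; left; rfl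
    rw [hx] at h2 h3
    have e2 : 1 - a = a := h2
    have e3 : a⁻¹ = a := h3
    have hsq : a * a = 1 := by
      field_simp at e3; linear_combination -e3
    have ham1 : a = -1 := by
      have hz : (a - 1) * (a + 1) = 0 := by linear_combination hsq
      rcases mul_eq_zero.mp hz with h | h
      · exact absurd (sub_eq_zero.mp h) h1
      · exact eq_neg_of_add_eq_zero_left h
    refine ⟨ham1, ?_⟩
    subst ham1
    linear_combination e2
  · rintro ⟨rfl, h3⟩
    refine ⟨-1, ?_⟩
    have h2 : (1 : K) - (-1) = -1 := by linear_combination h3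
    have hm2 : (-1 : K) - 1 = 1 := by linear_combination -h3
    have hinv : (-1 : K)⁻¹ = -1 := by
      rw [inv_eq_one_div]; field_simp
    ext x
    simp only [hexagon, Set.mem_insert_iff, Set.mem_singleton_iff, h2, hm2, hinv, inv_one,
      one_mul, mul_one]
    constructor
    · rintro (h | h | h | h | h | h) <;> simp_all
    · intro h; tauto
end

section
/- Let K be a field and let a ∈ K with a ≠ 0 and a ≠ 1. The hexagon H(a) has exactly three elements if and only if (a = −1, or a = 1 + 1, or a + a = 1) and 1 + 1 + 1 ≠ 0 in K. -/
lemma hexagon_ncard_six {K : Type*} [Field K] {a : K} (h0 : a ≠ 0) (h1 : a ≠ 1)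
    (hm1 : a ≠ -1) (h2 : a ≠ 1 + 1) (hh : a + a ≠ 1) (hq : a * a - a + 1 ≠ 0) :
    (hexagon a).ncard = 6 := by
  have h1' : (1 : K) - a ≠ 0 := sub_ne_zero.mpr (Ne.symm h1)
  have ha1 : a - 1 ≠ 0 := sub_ne_zero.mpr h1
  have key : ∀ x y : K, (a - x) * (a - y) = 0 → a = x ∨ a = y := fun x y h =>
    (mul_eq_zero.mp h).imp sub_eq_zero.mp sub_eq_zero.mp
  have d12 : a ≠ 1 - a := fun h => hh (by linear_combination h)
  have d13 : a ≠ a⁻¹ := by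
    intro h
    have h' : a * a = 1 := by nth_rewrite 2 [h]; exact mul_inv_cancel₀ h0
    rcases key 1 (-1) (by linear_combination h') with h'' | h''
    · exact h1 h''
    · exact hm1 h''
  have d14 : a ≠ (1 - a)⁻¹ := by
    intro h
    have h' : a * (1 - a) = 1 := by nth_rewrite 1 [h]; exact inv_mul_cancel₀ h1'
    exact hq (by linear_combination -h')
  have d15 : a ≠ (a - 1) * a⁻¹ := by
    intro h
    have h' : a * a = (a - 1) * a⁻¹ * a := by nth_rewrite 1 [h]; ring
    rw [mul_assoc, inv_mul_cancel₀ h0, mul_one] at h'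
    exact hq (by linear_combination h')
  have d16 : a ≠ a * (a - 1)⁻¹ := by
    intro h
    have h' : a * (a - 1) = a * (a - 1)⁻¹ * (a - 1) := by nth_rewrite 1 [h]; ring
    rw [mul_assoc, inv_mul_cancel₀ ha1, mul_one] at h'
    rcases key 0 (1 + 1) (by linear_combination h') with h'' | h''
    · exact h0 h''
    · exact h2 h''
  have d23 : (1 - a) ≠ a⁻¹ := by
    intro h
    have h' : (1 - a) * a = 1 := by rw [h]; exact inv_mul_cancel₀ h0
    exact hq (by linear_combination -h')
  have d24 : (1 - a) ≠ (1 - a)⁻¹ := by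
    intro h
    have h' : (1 - a) * (1 - a) = 1 := by nth_rewrite 2 [h]; exact mul_inv_cancel₀ h1'
    rcases key 0 (1 + 1) (by linear_combination h') with h'' | h''
    · exact h0 h''
    · exact h2 h''
  have d25 : (1 - a) ≠ (a - 1) * a⁻¹ := by
    intro h
    have h' : (1 - a) * a = (a - 1) * a⁻¹ * a := by rw [h]
    rw [mul_assoc, inv_mul_cancel₀ h0, mul_one] at h'
    rcases key 1 (-1) (by linear_combination -h') with h'' | h''
    · exact h1 h''
    · exact hm1 h''
  have d26 : (1 - a) ≠ a * (a - 1)⁻¹ := by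
    intro h
    have h' : (1 - a) * (a - 1) = a * (a - 1)⁻¹ * (a - 1) := by rw [h]
    rw [mul_assoc, inv_mul_cancel₀ ha1, mul_one] at h'
    exact hq (by linear_combination -h')
  have d34 : a⁻¹ ≠ (1 - a)⁻¹ := fun h => d12 (inv_injective h)
  have d35 : a⁻¹ ≠ (a - 1) * a⁻¹ := by
    intro h
    have h' : (1 : K) = a - 1 :=
      mul_right_cancel₀ (inv_ne_zero h0) (by rw [one_mul, ← h])
    exact h2 (by linear_combination -h')
  have d36 : a⁻¹ ≠ a * (a - 1)⁻¹ := by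
    intro h
    have h' : a⁻¹ * (a * (a - 1)) = a * (a - 1)⁻¹ * (a * (a - 1)) := by rw [h]
    have e : a⁻¹ * (a * (a - 1)) = a - 1 := by
      rw [← mul_assoc, inv_mul_cancel₀ h0, one_mul]
    have e' : a * (a - 1)⁻¹ * (a * (a - 1)) = a * a := by
      field_simp
    rw [e, e'] at h'
    exact hq (by linear_combination -h')
  have d45 : (1 - a)⁻¹ ≠ (a - 1) * a⁻¹ := by
    intro h
    have h' : (1 - a)⁻¹ * ((1 - a) * a) = (a - 1) * a⁻¹ * ((1 - a) * a) := by rw [h]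
    have e : (1 - a)⁻¹ * ((1 - a) * a) = a := by
      rw [← mul_assoc, inv_mul_cancel₀ h1', one_mul]
    have e' : (a - 1) * a⁻¹ * ((1 - a) * a) = (a - 1) * (1 - a) := by
      field_simp
    rw [e, e'] at h'
    exact hq (by linear_combination h')
  have d46 : (1 - a)⁻¹ ≠ a * (a - 1)⁻¹ := by
    intro h
    have h' : (1 - a)⁻¹ * ((1 - a) * (a - 1)) = a * (a - 1)⁻¹ * ((1 - a) * (a - 1)) := by rw [h]
    have e : (1 - a)⁻¹ * ((1 - a) * (a - 1)) = a - 1 := by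
      rw [← mul_assoc, inv_mul_cancel₀ h1', one_mul]
    have e' : a * (a - 1)⁻¹ * ((1 - a) * (a - 1)) = a * (1 - a) := by
      field_simp
    rw [e, e'] at h'
    rcases key 1 (-1) (by linear_combination h') with h'' | h''
    · exact h1 h''
    · exact hm1 h''
  have d56 : (a - 1) * a⁻¹ ≠ a * (a - 1)⁻¹ := by
    intro h
    have h' : (a - 1) * a⁻¹ * (a * (a - 1)) = a * (a - 1)⁻¹ * (a * (a - 1)) := by rw [h]
    have e : (a - 1) * a⁻¹ * (a * (a - 1)) = (a - 1) * (a - 1) := by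
      field_simp
    have e' : a * (a - 1)⁻¹ * (a * (a - 1)) = a * a := by
      field_simp
    rw [e, e'] at h'
    exact hh (by linear_combination -h')
  have m1 : a ∉ ({1 - a, a⁻¹, (1 - a)⁻¹, (a - 1) * a⁻¹, a * (a - 1)⁻¹} : Set K) := by
    simp only [Set.mem_insert_iff, Set.mem_singleton_iff]
    push_neg
    exact ⟨d12, d13, d14, d15, d16⟩
  have m2 : (1 - a) ∉ ({a⁻¹, (1 - a)⁻¹, (a - 1) * a⁻¹, a * (a - 1)⁻¹} : Set K) := by
    simp only [Set.mem_insert_iff, Set.mem_singleton_iff]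
    push_neg
    exact ⟨d23, d24, d25, d26⟩
  have m3 : a⁻¹ ∉ ({(1 - a)⁻¹, (a - 1) * a⁻¹, a * (a - 1)⁻¹} : Set K) := by
    simp only [Set.mem_insert_iff, Set.mem_singleton_iff]
    push_neg
    exact ⟨d34, d35, d36⟩
  have m4 : (1 - a)⁻¹ ∉ ({(a - 1) * a⁻¹, a * (a - 1)⁻¹} : Set K) := by
    simp only [Set.mem_insert_iff, Set.mem_singleton_iff]
    push_neg
    exact ⟨d45, d46⟩
  have m5 : (a - 1) * a⁻¹ ∉ ({a * (a - 1)⁻¹} : Set K) := by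
    simp only [Set.mem_singleton_iff]
    exact d56
  simp only [hexagon]
  rw [Set.ncard_insert_of_notMem m1, Set.ncard_insert_of_notMem m2,
    Set.ncard_insert_of_notMem m3, Set.ncard_insert_of_notMem m4,
    Set.ncard_insert_of_notMem m5, Set.ncard_singleton]

lemma aux_three {K : Type*} [Field K] (h2 : (1 + 1 : K) ≠ 0) (h3 : (1 + 1 + 1 : K) ≠ 0) :
    ({-1, 1 + 1, (1 + 1)⁻¹} : Set K).ncard = 3 := by
  have nx : (-1 : K) ≠ 1 + 1 := fun h => h3 (by linear_combination -h)
  have ny : (-1 : K) ≠ (1 + 1)⁻¹ := by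
    intro h
    have h' : (-1 : K) * (1 + 1) = 1 := by rw [h]; exact inv_mul_cancel₀ h2
    exact h3 (by linear_combination -h')
  have nz : (1 + 1 : K) ≠ (1 + 1)⁻¹ := by
    intro h
    have h' : (1 + 1 : K) * (1 + 1) = 1 := by nth_rewrite 2 [h]; exact mul_inv_cancel₀ h2
    exact h3 (by linear_combination h')
  have m1 : (-1 : K) ∉ ({1 + 1, (1 + 1)⁻¹} : Set K) := by
    simp only [Set.mem_insert_iff, Set.mem_singleton_iff]
    push_neg
    exact ⟨nx, ny⟩
  rw [Set.ncard_insert_of_notMem m1, Set.ncard_pair nz]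

/-- The hexagon of `a` has exactly three elements (dyadic type) if and only if
(`a = -1`, or `a = 1 + 1`, or `a + a = 1`) and `1 + 1 + 1 ≠ 0` in `K`. -/
theorem hexagon_ncard_eq_three_iff {K : Type*} [Field K] (a : K) (h0 : a ≠ 0) (h1 : a ≠ 1) :
    (hexagon a).ncard = 3 ↔ (a = -1 ∨ a = 1 + 1 ∨ a + a = 1) ∧ (1 + 1 + 1 : K) ≠ 0 := by
  constructor
  · intro hc
    have h3 : (1 + 1 + 1 : K) ≠ 0 := by
      intro h3
      by_cases hm : a = -1
      · subst hm
        have e1 : (1 : K) - -1 = -1 := by linear_combination h3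
        have e2 : (-1 : K) - 1 = 1 := by linear_combination -h3
        have hone : hexagon (-1 : K) = {-1} := by
          simp only [hexagon]
          rw [e1, e2, inv_neg_one, inv_one, one_mul, mul_one]
          ext x
          simp
        rw [hone, Set.ncard_singleton] at hc
        norm_num at hc
      · have h2 : a ≠ 1 + 1 := fun h => hm (by rw [h]; linear_combination h3)
        have h2ne : (1 + 1 : K) ≠ 0 := fun h2z =>
          one_ne_zero (α := K) (by linear_combination h3 - h2z)
        have hh : a + a ≠ 1 := by
          intro hha
          apply hm
          have e : (1 + 1 : K) * (a + 1) = 0 := by linear_combination hha + h3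
          rcases mul_eq_zero.mp e with h' | h'
          · exact absurd h' h2ne
          · exact eq_neg_of_add_eq_zero_left h'
        have hq : a * a - a + 1 ≠ 0 := by
          intro hqa
          apply hm
          have e : (a + 1) * (a + 1) = 0 := by linear_combination hqa + a * h3
          exact eq_neg_of_add_eq_zero_left (mul_self_eq_zero.mp e)
        rw [hexagon_ncard_six h0 h1 hm h2 hh hq] at hc
        norm_num at hc
    refine ⟨?_, h3⟩
    by_contra hnd
    push_neg at hnd
    obtain ⟨hm1, h2, hh⟩ := hnd
    by_cases hq : a * a - a + 1 = 0
    · have h1' : (1 : K) - a ≠ 0 := sub_ne_zero.mpr (Ne.symm h1)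
      have e3 : a⁻¹ = 1 - a := inv_eq_of_mul_eq_one_right (by linear_combination -hq)
      have e4 : (1 - a)⁻¹ = a := inv_eq_of_mul_eq_one_right (by linear_combination -hq)
      have e5 : (a - 1)⁻¹ = -a := inv_eq_of_mul_eq_one_right (by linear_combination -hq)
      have hset : hexagon a = {a, 1 - a} := by
        simp only [hexagon]
        rw [e3, e4, e5, show (a - 1) * (1 - a) = a from by linear_combination -hq,
          show a * -a = 1 - a from by linear_combination -hq]
        ext x
        simp only [Set.mem_insert_iff, Set.mem_singleton_iff]
        tauto
      rw [hset, Set.ncard_pair (fun h => hh (by linear_combination h))] at hc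
      norm_num at hc
    · rw [hexagon_ncard_six h0 h1 hm1 h2 hh hq] at hc
      norm_num at hc
  · rintro ⟨hd, h3⟩
    rcases hd with hd | hd | hd
    · subst hd
      have h2ne : (1 + 1 : K) ≠ 0 := by
        intro h
        exact h1 (by linear_combination -h)
      have hset : hexagon (-1 : K) = {-1, 1 + 1, (1 + 1)⁻¹} := by
        simp only [hexagon]
        rw [show (1 : K) - -1 = 1 + 1 from by ring, inv_neg_one,
          show ((-1 : K) - 1) = -(1 + 1) from by ring, inv_neg,
          show (-(1 + 1) : K) * -1 = 1 + 1 from by ring,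
          show (-1 : K) * -(1 + 1)⁻¹ = (1 + 1)⁻¹ from by ring]
        ext x
        simp only [Set.mem_insert_iff, Set.mem_singleton_iff]
        tauto
      rw [hset]
      exact aux_three h2ne h3
    · subst hd
      have h2ne : (1 + 1 : K) ≠ 0 := h0
      have hset : hexagon (1 + 1 : K) = {-1, 1 + 1, (1 + 1)⁻¹} := by
        simp only [hexagon]
        rw [show (1 : K) - (1 + 1) = -1 from by ring, inv_neg_one,
          show ((1 + 1 : K) - 1) = 1 from by ring, inv_one, one_mul, mul_one]
        ext x
        simp only [Set.mem_insert_iff, Set.mem_singleton_iff]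
        tauto
      rw [hset]
      exact aux_three h2ne h3
    · have h2ne : (1 + 1 : K) ≠ 0 := by
        intro h
        apply one_ne_zero (α := K)
        linear_combination -hd + a * h
      have e1 : 1 - a = a := by linear_combination -hd
      have e2 : a⁻¹ = 1 + 1 := inv_eq_of_mul_eq_one_right (by linear_combination hd)
      have e5 : (a - 1)⁻¹ = -(1 + 1) := inv_eq_of_mul_eq_one_right (by linear_combination -hd)
      have ea : a = (1 + 1)⁻¹ := eq_inv_of_mul_eq_one_left (by linear_combination hd)
      have hset : hexagon a = {-1, 1 + 1, (1 + 1)⁻¹} := by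
        simp only [hexagon]
        rw [e1, e2, show (a - 1) * (1 + 1) = -1 from by linear_combination hd,
          e5, show a * -(1 + 1) = -1 from by linear_combination -hd, ea]
        ext x
        simp only [Set.mem_insert_iff, Set.mem_singleton_iff]
        tauto
      rw [hset]
      exact aux_three h2ne h3
end

section
/- Let K be a field, let m ∈ {1, 2, 3}, and let a, b ∈ K with a, b ∉ {0, 1}. If the hexagons H(a) and H(b) both have exactly m elements, then H(a) = H(b). In other words, a field has at most one hexagon of ternary type, at most one hexagon of dyadic type, and at most one hexagon of hexagonal type. -/
section HexagonAux

variable {K : Type*} [Field K]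

lemma hexagon_finite (a : K) : (hexagon a).Finite := by
  unfold hexagon
  exact Set.toFinite _

/-- If `a² - a + 1 = 0` then the hexagon of `a` is the pair `{a, 1 - a}`. -/
lemma hexagon_of_quad {a : K} (h : a * a - a + 1 = 0) :
    hexagon a = {a, 1 - a} := by
  have h1 : a * (1 - a) = 1 := by linear_combination -h
  have h2 : (1 - a) * a = 1 := by linear_combination -h
  have hinv : a⁻¹ = 1 - a := inv_eq_of_mul_eq_one_right h1
  have hinv2 : (1 - a)⁻¹ = a := inv_eq_of_mul_eq_one_right h2
  have hinv3 : (a - 1)⁻¹ = -a := inv_eq_of_mul_eq_one_right (by linear_combination -h)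
  unfold hexagon
  rw [hinv, hinv2, hinv3]
  have h5 : (a - 1) * (1 - a) = a := by linear_combination -h
  have h6 : a * -a = 1 - a := by linear_combination -h
  rw [h5, h6]
  ext x
  simp only [Set.mem_insert_iff, Set.mem_singleton_iff]
  tauto

/-- If `a ∈ {-1, 2, 1/2}` then `2 ≠ 0` and the hexagon of `a` is `{-1, 2, 2⁻¹}`. -/
lemma hexagon_of_dyadic {a : K} (ha0 : a ≠ 0) (ha1 : a ≠ 1)
    (h : a = -1 ∨ a = 2 ∨ 2 * a = 1) :
    (2 : K) ≠ 0 ∧ hexagon a = {-1, 2, (2 : K)⁻¹} := by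
  rcases h with h | h | h
  · subst h
    have h2 : (2 : K) ≠ 0 := fun h2 => ha1 (by linear_combination -h2)
    refine ⟨h2, ?_⟩
    unfold hexagon
    have e1 : (1 : K) - -1 = 2 := by ring
    have e2 : ((-1 : K))⁻¹ = -1 := inv_neg_one
    have e3 : ((-1 : K) - 1) * (-1 : K)⁻¹ = 2 := by rw [e2]; ring
    have e4 : (-1 : K) * ((-1 : K) - 1)⁻¹ = 2⁻¹ := by
      rw [show ((-1 : K) - 1) = -2 by ring, inv_neg]; ring
    rw [e3, e4, e1, e2]
    ext x; simp only [Set.mem_insert_iff, Set.mem_singleton_iff]; tauto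
  · subst h
    refine ⟨ha0, ?_⟩
    unfold hexagon
    have e1 : (1 : K) - 2 = -1 := by ring
    have e3 : ((2 : K) - 1) * (2 : K)⁻¹ = 2⁻¹ := by rw [show (2:K)-1 = 1 by ring]; ring
    have e4 : (2 : K) * ((2 : K) - 1)⁻¹ = 2 := by rw [show (2:K)-1 = 1 by ring]; simp
    rw [e3, e4, e1]
    have e2 : ((-1 : K))⁻¹ = -1 := inv_neg_one
    rw [e2]
    ext x; simp only [Set.mem_insert_iff, Set.mem_singleton_iff]; tauto
  · have h2 : (2 : K) ≠ 0 := fun h2 => by rw [h2, zero_mul] at h; exact one_ne_zero h.symm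
    have ha : a = 2⁻¹ := by field_simp; linear_combination h
    subst ha
    refine ⟨h2, ?_⟩
    unfold hexagon
    have e1 : (1 : K) - 2⁻¹ = 2⁻¹ := by
      field_simp
      ring
    have e2 : ((2 : K)⁻¹)⁻¹ = 2 := inv_inv 2
    have e3 : ((2 : K)⁻¹ - 1) * ((2 : K)⁻¹)⁻¹ = -1 := by rw [e2]; field_simp; ring
    have e4 : (2 : K)⁻¹ * ((2 : K)⁻¹ - 1)⁻¹ = -1 := by
      rw [show ((2 : K)⁻¹ - 1) = -2⁻¹ by field_simp; ring, inv_neg, e2]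
      field_simp
      try ring
    rw [e3, e4, e1, e2]
    ext x; simp only [Set.mem_insert_iff, Set.mem_singleton_iff]; tauto

/-- The set `{-1, 2, 2⁻¹}` never has exactly two elements (when `2 ≠ 0`). -/
lemma ncard_dyadic_ne_two (h2 : (2 : K) ≠ 0) :
    ({-1, 2, (2 : K)⁻¹} : Set K).ncard ≠ 2 := by
  by_cases h3 : (3 : K) = 0
  · have e2 : ((2 : K))⁻¹ = -1 :=
      inv_eq_of_mul_eq_one_right (show (2:K) * -1 = 1 by linear_combination -h3)
    have e1 : (2 : K) = -1 := by linear_combination h3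
    have : ({-1, 2, (2 : K)⁻¹} : Set K) = {-1} := by rw [e2, e1]; simp
    rw [this]; simp
  · have d1 : (-1 : K) ≠ 2 := fun h => h3 (by linear_combination -h)
    have d2 : (-1 : K) ≠ 2⁻¹ := by
      intro h
      have : (2 : K) * -1 = 1 := by rw [h]; exact mul_inv_cancel₀ h2
      exact h3 (by linear_combination -this)
    have d3 : (2 : K) ≠ 2⁻¹ := by
      intro h
      have : (2 : K) * 2 = 1 := by nth_rewrite 2 [h]; exact mul_inv_cancel₀ h2
      exact h3 (by linear_combination this)
    have : ({-1, 2, (2 : K)⁻¹} : Set K).ncard = 3 := by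
      rw [Set.ncard_insert_of_notMem (by simp [d1, d2]),
          Set.ncard_insert_of_notMem (by simp [d3]), Set.ncard_singleton]
    omega

/-- A hexagon with at most 3 elements forces `a` to be a root of `x² - x + 1`
or one of `-1`, `2`, `1/2`. -/
lemma hexagon_small_cases {a : K} (ha0 : a ≠ 0) (ha1 : a ≠ 1)
    (h : (hexagon a).ncard ≤ 3) :
    a * a - a + 1 = 0 ∨ a = -1 ∨ a = 2 ∨ 2 * a = 1 := by
  by_contra hc
  push_neg at hc
  obtain ⟨h1, h2, h3, h4⟩ := hc
  have ha1' : (1 : K) - a ≠ 0 := sub_ne_zero.mpr (Ne.symm ha1)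
  have d12 : a ≠ 1 - a := fun h => h4 (by linear_combination h)
  have d13 : a ≠ a⁻¹ := by
    intro h
    have hsq : a * a = 1 := by
      nth_rewrite 2 [h]
      exact mul_inv_cancel₀ ha0
    have : (a - 1) * (a + 1) = 0 := by linear_combination hsq
    rcases mul_eq_zero.mp this with h' | h'
    · exact ha1 (by linear_combination h')
    · exact h2 (by linear_combination h')
  have d14 : a ≠ (1 - a)⁻¹ := by
    intro h
    have : a * (1 - a) = 1 := by nth_rewrite 1 [h]; exact inv_mul_cancel₀ ha1'
    exact h1 (by linear_combination -this)
  have d23 : (1 : K) - a ≠ a⁻¹ := by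
    intro h
    have : (1 - a) * a = 1 := by rw [h]; exact inv_mul_cancel₀ ha0
    exact h1 (by linear_combination -this)
  have d24 : (1 : K) - a ≠ (1 - a)⁻¹ := by
    intro h
    have hsq : (1 - a) * (1 - a) = 1 := by
      nth_rewrite 2 [h]
      exact mul_inv_cancel₀ ha1'
    have : a * (a - 2) = 0 := by linear_combination hsq
    rcases mul_eq_zero.mp this with h' | h'
    · exact ha0 h'
    · exact h3 (by linear_combination h')
  have d34 : (a : K)⁻¹ ≠ (1 - a)⁻¹ := fun h => d12 (inv_injective h)
  have hsub : ({a, 1 - a, a⁻¹, (1 - a)⁻¹} : Set K) ⊆ hexagon a := by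
    intro x hx
    unfold hexagon
    simp only [Set.mem_insert_iff, Set.mem_singleton_iff] at hx ⊢
    tauto
  have hcard4 : ({a, 1 - a, a⁻¹, (1 - a)⁻¹} : Set K).ncard = 4 := by
    rw [Set.ncard_insert_of_notMem (by simp [d12, d13, d14]),
        Set.ncard_insert_of_notMem (by simp [d23, d24]),
        Set.ncard_insert_of_notMem (by simp [d34]), Set.ncard_singleton]
  have := Set.ncard_le_ncard hsub (hexagon_finite a)
  omega

/-- A hexagon with exactly one element forces `a = -1` (and the characteristic is 3). -/
lemma hexagon_card_one {a : K} (ha0 : a ≠ 0) (ha1 : a ≠ 1)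
    (h : (hexagon a).ncard = 1) : a = -1 := by
  obtain ⟨x, hx⟩ := Set.ncard_eq_one.mp h
  have m1 : a ∈ hexagon a := by unfold hexagon; simp
  have m2 : a⁻¹ ∈ hexagon a := by
    unfold hexagon
    simp
  rw [hx, Set.mem_singleton_iff] at m1 m2
  have h' : a = a⁻¹ := m1.trans m2.symm
  have hsq : a * a = 1 := by
    nth_rewrite 2 [h']
    exact mul_inv_cancel₀ ha0
  have : (a - 1) * (a + 1) = 0 := by linear_combination hsq
  rcases mul_eq_zero.mp this with h' | h'
  · exact absurd (by linear_combination h') ha1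
  · linear_combination h'

end HexagonAux

/-- A field has at most one hexagon of ternary type (cardinality 1), at most one of
hexagonal type (cardinality 2) and at most one of dyadic type (cardinality 3):
two hexagons of the same cardinality `m ∈ {1, 2, 3}` coincide. -/
theorem hexagon_unique_of_small_card {K : Type*} [Field K] (m : ℕ)
    (hm : m = 1 ∨ m = 2 ∨ m = 3) (a b : K)
    (ha0 : a ≠ 0) (ha1 : a ≠ 1) (hb0 : b ≠ 0) (hb1 : b ≠ 1)
    (hcarda : (hexagon a).ncard = m) (hcardb : (hexagon b).ncard = m) :
    hexagon a = hexagon b := by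
  rcases hm with rfl | rfl | rfl
  · rw [hexagon_card_one ha0 ha1 hcarda, hexagon_card_one hb0 hb1 hcardb]
  · have key : ∀ c : K, c ≠ 0 → c ≠ 1 → (hexagon c).ncard = 2 →
        c * c - c + 1 = 0 := by
      intro c hc0 hc1 hc
      rcases hexagon_small_cases hc0 hc1 (by omega) with h | h
      · exact h
      · obtain ⟨h2, hset⟩ := hexagon_of_dyadic hc0 hc1 h
        rw [hset] at hc
        exact absurd hc (ncard_dyadic_ne_two h2)
    have hqa := key a ha0 ha1 hcarda
    have hqb := key b hb0 hb1 hcardb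
    rw [hexagon_of_quad hqa, hexagon_of_quad hqb]
    have : (a - b) * (a + b - 1) = 0 := by linear_combination hqa - hqb
    rcases mul_eq_zero.mp this with h | h
    · have hab : a = b := by linear_combination h
      rw [hab]
    · have hab : b = 1 - a := by linear_combination h
      rw [hab, show (1 : K) - (1 - a) = a by ring]
      exact Set.pair_comm a (1 - a)
  · have key : ∀ c : K, c ≠ 0 → c ≠ 1 → (hexagon c).ncard = 3 →
        hexagon c = {-1, 2, (2 : K)⁻¹} := by
      intro c hc0 hc1 hc
      rcases hexagon_small_cases hc0 hc1 (by omega) with h | h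
      · exfalso
        rw [hexagon_of_quad h] at hc
        have hle : ({c, 1 - c} : Set K).ncard ≤ 2 := by
          have := Set.ncard_insert_le c ({1 - c} : Set K)
          simpa using this
        omega
      · exact (hexagon_of_dyadic hc0 hc1 h).2
    rw [key a ha0 ha1 hcarda, key b hb0 hb1 hcardb]
end

section
/- Let K be a finite field with q elements. There exists an element a ∈ K with a ∉ {0,1} whose hexagon H(a) has exactly three elements if and only if q is odd and q is not divisible by 3. -/
/-- If `a² - a + 1 = 0` then the hexagon of `a` collapses to `{a, 1 - a}`. -/
lemma hexagon_subset_of_quad {K : Type*} [Field K] {a : K} (ha : a ≠ 0) (ha1 : a ≠ 1)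
    (h : a * a - a + 1 = 0) : hexagon a ⊆ {a, 1 - a} := by
  have h1a : (1 : K) - a ≠ 0 := sub_ne_zero.mpr (Ne.symm ha1)
  have hinv1 : a⁻¹ = 1 - a := inv_eq_of_mul_eq_one_right (by linear_combination -h)
  have hinv2 : (1 - a)⁻¹ = a := inv_eq_of_mul_eq_one_right (by linear_combination -h)
  have hinv3 : (a - 1)⁻¹ = -a := by
    rw [show a - 1 = -(1 - a) by ring, inv_neg, hinv2]
  have e5 : (a - 1) * a⁻¹ = a := by rw [hinv1]; linear_combination -h
  have e6 : a * (a - 1)⁻¹ = 1 - a := by rw [hinv3]; linear_combination -h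
  unfold hexagon
  rw [e5, e6, hinv1, hinv2]
  intro x hx
  simp only [Set.mem_insert_iff, Set.mem_singleton_iff] at hx ⊢
  tauto

/-- A finite field with `q` elements has a hexagon of dyadic type (exactly three
elements) if and only if `q` is odd and not divisible by `3`. -/
theorem exists_dyadic_hexagon_iff {K : Type*} [Field K] [Fintype K] (q : ℕ)
    (hq : Fintype.card K = q) :
    (∃ a : K, a ≠ 0 ∧ a ≠ 1 ∧ (hexagon a).ncard = 3) ↔ Odd q ∧ ¬ 3 ∣ q := by
  haveI : CharP K (ringChar K) := ringChar.charP K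
  obtain ⟨n, hp, hcard⟩ := FiniteField.card K (ringChar K)
  -- Reduce the arithmetic conditions on q to statements about 2 and 3 in K
  have key2 : (2 : K) ≠ 0 ↔ Odd q := by
    constructor
    · intro h2
      have hne : ringChar K ≠ 2 := by
        intro hc
        apply h2
        have := CharP.cast_eq_zero K (ringChar K)
        rw [hc] at this
        exact_mod_cast this
      rw [← hq, hcard]
      exact (hp.odd_of_ne_two hne).pow
    · intro hodd h2
      have hdvd : ringChar K ∣ 2 := (CharP.cast_eq_zero_iff K (ringChar K) 2).mp h2
      have : ringChar K = 2 := (Nat.prime_dvd_prime_iff_eq hp Nat.prime_two).mp hdvd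
      rw [← hq, hcard, this] at hodd
      obtain ⟨k, hk⟩ := dvd_pow_self 2 n.ne_zero
      have h1 := Nat.odd_iff.mp hodd
      omega
  have key3 : (3 : K) ≠ 0 ↔ ¬ 3 ∣ q := by
    constructor
    · intro h3 hdvd
      rw [← hq, hcard] at hdvd
      have h3p : (3 : ℕ) ∣ ringChar K := Nat.Prime.dvd_of_dvd_pow (by norm_num) hdvd
      have : ringChar K = 3 :=
        ((Nat.prime_dvd_prime_iff_eq (by norm_num) hp).mp h3p).symm
      apply h3
      have hc := CharP.cast_eq_zero K (ringChar K)
      rw [this] at hc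
      exact_mod_cast hc
    · intro hnd h3
      apply hnd
      have hdvd : ringChar K ∣ 3 := (CharP.cast_eq_zero_iff K (ringChar K) 3).mp h3
      have : ringChar K = 3 := (Nat.prime_dvd_prime_iff_eq hp (by norm_num)).mp hdvd
      rw [← hq, hcard, this]
      exact dvd_pow_self 3 n.ne_zero
  rw [← key2, ← key3]
  constructor
  · rintro ⟨a, ha, ha1, hcard3⟩
    have h1a : (1 : K) - a ≠ 0 := sub_ne_zero.mpr (Ne.symm ha1)
    -- a² - a + 1 ≠ 0, else the hexagon has at most 2 elements
    have hquad : a * a - a + 1 ≠ 0 := by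
      intro h
      have hsub := hexagon_subset_of_quad ha ha1 h
      have hle : (hexagon a).ncard ≤ ({a, 1 - a} : Set K).ncard :=
        Set.ncard_le_ncard hsub (Set.toFinite _)
      have : ({a, 1 - a} : Set K).ncard ≤ 2 := by
        calc ({a, 1 - a} : Set K).ncard ≤ ({1 - a} : Set K).ncard + 1 :=
              Set.ncard_insert_le _ _
          _ = 2 := by rw [Set.ncard_singleton]
      omega
    -- a must be one of -1, 2, 1/2
    have hkey : a = -1 ∨ a = 2 ∨ 2 * a = 1 := by
      by_contra hcon
      push_neg at hcon
      obtain ⟨hm1, h2a, hhalf⟩ := hcon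
      -- then a, 1-a, a⁻¹, (1-a)⁻¹ are four distinct elements of the hexagon
      have d12 : a ≠ 1 - a := fun h => hhalf (by linear_combination h)
      have d13 : a ≠ a⁻¹ := by
        intro h
        have hm : a * a = a⁻¹ * a := by rw [← h]
        rw [inv_mul_cancel₀ ha] at hm
        rcases mul_self_eq_one_iff.mp hm with h' | h'
        · exact ha1 h'
        · exact hm1 h'
      have d14 : a ≠ (1 - a)⁻¹ := by
        intro h
        apply hquad
        have hm : a * (1 - a) = (1 - a)⁻¹ * (1 - a) := by rw [← h]
        rw [inv_mul_cancel₀ h1a] at hm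
        linear_combination -hm
      have d23 : (1 : K) - a ≠ a⁻¹ := by
        intro h
        apply hquad
        have hm : (1 - a) * a = a⁻¹ * a := by rw [← h]
        rw [inv_mul_cancel₀ ha] at hm
        linear_combination -hm
      have d24 : (1 : K) - a ≠ (1 - a)⁻¹ := by
        intro h
        have hm : (1 - a) * (1 - a) = (1 - a)⁻¹ * (1 - a) := by rw [← h]
        rw [inv_mul_cancel₀ h1a] at hm
        rcases mul_self_eq_one_iff.mp hm with h' | h'
        · exact ha (by linear_combination -h')
        · exact h2a (by linear_combination -h')
      have d34 : a⁻¹ ≠ (1 - a)⁻¹ := by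
        intro h
        exact d12 (inv_injective h)
      have hsub : ({a, 1 - a, a⁻¹, (1 - a)⁻¹} : Set K) ⊆ hexagon a := by
        intro x hx
        unfold hexagon
        simp only [Set.mem_insert_iff, Set.mem_singleton_iff] at hx ⊢
        tauto
      have hn4 : ({a, 1 - a, a⁻¹, (1 - a)⁻¹} : Set K).ncard = 4 := by
        rw [Set.ncard_insert_of_notMem (by simp [d12, d13, d14]),
          Set.ncard_insert_of_notMem (by simp [d23, d24]),
          Set.ncard_insert_of_notMem (by simp [d34]), Set.ncard_singleton]
      have := Set.ncard_le_ncard hsub (Set.toFinite _)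
      omega
    -- in each case derive 2 ≠ 0 and 3 ≠ 0
    rcases hkey with h | h | h
    · subst h
      constructor
      · intro h2
        exact ha1 (by linear_combination -h2)
      · intro h3
        exact hquad (by linear_combination h3)
    · subst h
      constructor
      · exact ha
      · intro h3
        exact hquad (by linear_combination h3)
    · have h2 : (2 : K) ≠ 0 := by
        intro h2
        have : (1 : K) = 0 := by linear_combination a * h2 - h
        exact one_ne_zero this
      refine ⟨h2, ?_⟩
      intro h3
      apply hquad
      have h4 : (2 : K) * 2 ≠ 0 := mul_ne_zero h2 h2
      have hz : (2 : K) * 2 * (a * a - a + 1) = 0 := by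
        linear_combination (2 * a - 1) * h + h3
      rcases mul_eq_zero.mp hz with h' | h'
      · exact absurd h' h4
      · exact h'
  · rintro ⟨h2, h3⟩
    refine ⟨-1, by intro h; exact h2 (by linear_combination -2 * h), ?_, ?_⟩
    · intro h
      exact h2 (by linear_combination -h)
    · have e1 : (1 : K) - (-1) = 2 := by ring
      have e2 : ((-1 : K))⁻¹ = -1 := by rw [inv_neg, inv_one]
      have e3 : ((-1 : K) - 1) * (-1 : K)⁻¹ = 2 := by rw [e2]; ring
      have e4 : (-1 : K) * ((-1 : K) - 1)⁻¹ = 2⁻¹ := by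
        rw [show ((-1 : K) - 1) = -2 by ring, inv_neg]; ring
      have hset : hexagon (-1 : K) = {-1, 2, 2⁻¹} := by
        unfold hexagon
        rw [e3, e4, e1, e2]
        ext x
        simp only [Set.mem_insert_iff, Set.mem_singleton_iff]
        tauto
      rw [hset]
      rw [Set.ncard_eq_three]
      refine ⟨-1, 2, 2⁻¹, ?_, ?_, ?_, rfl⟩
      · intro h; exact h3 (by linear_combination -h)
      · intro h
        have : (2 : K) * 2⁻¹ = 1 := mul_inv_cancel₀ h2
        rw [← h] at this
        exact h3 (by linear_combination -this)
      · intro h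
        have : (2 : K) * 2⁻¹ = 1 := mul_inv_cancel₀ h2
        rw [← h] at this
        exact h3 (by linear_combination this)
end

section
/- Let K be a finite field with q elements. There exists an element a ∈ K with a ∉ {0,1} whose hexagon H(a) has exactly two elements if and only if q − 1 is divisible by 3. -/
lemma pigeon3 {α : Type*} {x y p q r : α} (hp : p = x ∨ p = y) (hq : q = x ∨ q = y)
    (hr : r = x ∨ r = y) : p = q ∨ p = r ∨ q = r := by
  rcases hp with h1|h1 <;> rcases hq with h2|h2 <;> rcases hr with h3|h3 <;>
    simp [h1, h2, h3]

lemma hexagon_neg_one_char3 {K : Type*} [Field K] (h3 : (3:K) = 0) :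
    hexagon (-1 : K) = {-1} := by
  have e1 : (1:K) - (-1) = -1 := by linear_combination h3
  have e2 : ((-1:K))⁻¹ = -1 := by norm_num
  have e3 : ((-1:K) - 1) * (-1:K)⁻¹ = -1 := by rw [e2]; linear_combination h3
  have e4 : (-1:K) * ((-1:K) - 1)⁻¹ = -1 := by
    have : ((-1:K) - 1) = 1 := by linear_combination -h3
    rw [this]; norm_num
  simp [hexagon, e1, e2, e3, e4]

lemma key {K : Type*} [Field K] {a : K} (ha0 : a ≠ 0) (ha1 : a ≠ 1)
    (h : (hexagon a).ncard = 2) : a * (1 - a) = 1 := by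
  obtain ⟨x, y, hxy, heq⟩ := Set.ncard_eq_two.mp h
  have hsub : a - 1 ≠ 0 := sub_ne_zero.mpr ha1
  have hsub' : (1:K) - a ≠ 0 := fun hc => hsub (by linear_combination -hc)
  have mem1 : a ∈ hexagon a := by simp [hexagon]
  have mem2 : 1 - a ∈ hexagon a := by simp [hexagon]
  have mem3 : a⁻¹ ∈ hexagon a := by simp [hexagon]
  rw [heq] at mem1 mem2 mem3
  simp only [Set.mem_insert_iff, Set.mem_singleton_iff] at mem1 mem2 mem3
  have char3 : (3:K) = 0 → a = -1 → False := by
    rintro h3 rfl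
    rw [hexagon_neg_one_char3 h3] at heq
    have hx : x = -1 := by
      have : x ∈ ({-1} : Set K) := heq ▸ (by simp : x ∈ ({x, y} : Set K))
      simpa using this
    have hy : y = -1 := by
      have : y ∈ ({-1} : Set K) := heq ▸ (by simp : y ∈ ({x, y} : Set K))
      simpa using this
    exact hxy (hx.trans hy.symm)
  rcases pigeon3 mem1 mem2 mem3 with hc | hc | hc
  · -- a = 1 - a
    exfalso
    have h2a : a + a = 1 := by linear_combination hc
    have mem4 : (1 - a)⁻¹ ∈ hexagon a := by simp [hexagon]
    have mem5 : (a - 1) * a⁻¹ ∈ hexagon a := by simp [hexagon]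
    rw [heq] at mem4 mem5
    simp only [Set.mem_insert_iff, Set.mem_singleton_iff] at mem4 mem5
    have h3 : (3:K) = 0 := by
      rcases pigeon3 mem1 mem4 mem5 with hd | hd | hd
      · have hd' : a * (1 - a) = 1 := by
          field_simp at hd; linear_combination hd
        linear_combination -4 * hd' - (2*a - 1) * h2a
      · have hd' : a * a = a - 1 := by
          field_simp at hd; linear_combination hd
        linear_combination 4 * hd' - (2*a - 1) * h2a
      · have hd' : a = (a - 1) * (1 - a) := by
          field_simp at hd; linear_combination hd
        linear_combination 4 * hd' - (2*a - 1) * h2a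
    exact char3 h3 (by linear_combination -h2a + a * h3)
  · -- a = a⁻¹
    exfalso
    have ha2 : a * a = 1 := by field_simp at hc; linear_combination hc
    have ham : a = -1 := by
      have : (a - 1) * (a + 1) = 0 := by linear_combination ha2
      rcases mul_eq_zero.mp this with h' | h'
      · exact absurd (by linear_combination h') ha1
      · linear_combination h'
    subst ham
    have mem4 : (1:K) - (-1) ∈ hexagon (-1:K) := by simp [hexagon]
    have mem5 : ((1:K) - (-1))⁻¹ ∈ hexagon (-1:K) := by simp [hexagon]
    rw [heq] at mem4 mem5
    simp only [Set.mem_insert_iff, Set.mem_singleton_iff] at mem4 mem5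
    have h2 : (1:K) - (-1) = 2 := by norm_num
    rw [h2] at mem4 mem5
    have h3 : (3:K) = 0 := by
      rcases eq_or_ne ((2:K)) 0 with h20 | h20
      · exact absurd (by linear_combination -h20) ha1
      rcases pigeon3 mem1 mem4 mem5 with hd | hd | hd
      · linear_combination -hd
      · have : (-1:K) * 2 = 1 := by rw [hd]; exact inv_mul_cancel₀ h20
        linear_combination -this
      · have : (2:K) * 2 = 1 := by
          nth_rewrite 1 [hd]; exact inv_mul_cancel₀ h20
        linear_combination this
    exact char3 h3 rfl
  · -- 1 - a = a⁻¹
    field_simp at hc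
    linear_combination hc

/-- A finite field with `q` elements has a hexagon of hexagonal type (exactly two
elements) if and only if `3` divides `q - 1`. -/
theorem exists_hexagonal_hexagon_iff {K : Type*} [Field K] [Fintype K] (q : ℕ)
    (hq : Fintype.card K = q) :
    (∃ a : K, a ≠ 0 ∧ a ≠ 1 ∧ (hexagon a).ncard = 2) ↔ 3 ∣ (q - 1) := by
  have hcard : Nat.card Kˣ = q - 1 := by
    rw [Nat.card_units, Nat.card_eq_fintype_card, hq]
  have hq2 : 2 ≤ q := hq ▸ Fintype.one_lt_card
  constructor
  · rintro ⟨a, ha0, ha1, h⟩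
    have hk := key ha0 ha1 h
    have hb3 : (-a) ^ 3 = 1 := by linear_combination (a + 1) * hk
    have hb1 : (-a) ≠ 1 := by
      intro hc
      have ham : a = -1 := by linear_combination -hc
      have h3 : (3:K) = 0 := by rw [ham] at hk; linear_combination -hk
      rw [ham, hexagon_neg_one_char3 h3] at h
      simp at h
    have hbne : (-a) ≠ 0 := neg_ne_zero.mpr ha0
    set u : Kˣ := Units.mk0 (-a) hbne with hu
    have hu3 : u ^ 3 = 1 := by
      ext; rw [Units.val_pow_eq_pow_val]; simpa [hu] using hb3
    have hu1 : u ≠ 1 := by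
      intro hc
      apply hb1
      simpa [hu] using congrArg Units.val hc
    have hord : orderOf u = 3 := by
      have hdvd : orderOf u ∣ 3 := orderOf_dvd_of_pow_eq_one hu3
      rcases (Nat.Prime.eq_one_or_self_of_dvd (by norm_num) _ hdvd) with h' | h'
      · exact absurd (orderOf_eq_one_iff.mp h') hu1
      · exact h'
    rw [← hcard, ← hord]
    exact orderOf_dvd_natCard u
  · intro h3
    obtain ⟨d, hd⟩ := h3
    obtain ⟨g, hg⟩ := IsCyclic.exists_ofOrder_eq_natCard (α := Kˣ)
    rw [hcard] at hg
    have hd1 : 1 ≤ d := by omega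
    set u : Kˣ := g ^ d with hu
    have hu3 : u ^ 3 = 1 := by
      rw [hu, ← pow_mul, mul_comm, ← hd, ← hg]
      exact pow_orderOf_eq_one g
    have hu1 : u ≠ 1 := by
      intro hc
      have : orderOf g ∣ d := orderOf_dvd_of_pow_eq_one hc
      rw [hg] at this
      have := Nat.le_of_dvd (by omega) this
      omega
    set b : K := (u : K) with hb
    have hb3 : b ^ 3 = 1 := by
      rw [hb, ← Units.val_pow_eq_pow_val, hu3, Units.val_one]
    have hb1 : b ≠ 1 := fun hc => hu1 (Units.ext (by simpa [hb] using hc))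
    have hbb : b ^ 2 + b + 1 = 0 := by
      have hfac : (b - 1) * (b ^ 2 + b + 1) = 0 := by linear_combination hb3
      rcases mul_eq_zero.mp hfac with h' | h'
      · exact absurd (by linear_combination h') hb1
      · exact h'
    refine ⟨-b, neg_ne_zero.mpr u.ne_zero, ?_, ?_⟩
    · intro hc
      have : b = -1 := by linear_combination -hc
      rw [this] at hbb
      exact one_ne_zero (by linear_combination hbb)
    · have hk : (-b) * (1 - (-b)) = 1 := by linear_combination -hbb
      set a : K := -b with ha
      have ha0 : a ≠ 0 := neg_ne_zero.mpr u.ne_zero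
      have h3K : (3:K) ≠ 0 := by
        intro hc
        have hchar : ringChar K ∣ 3 := ringChar.dvd (by exact_mod_cast hc)
        have hprime : (ringChar K).Prime := CharP.char_is_prime K (ringChar K)
        have hchar3 : ringChar K = 3 :=
          ((Nat.dvd_prime (by norm_num)).mp hchar).resolve_left hprime.one_lt.ne'
        obtain ⟨n, -, hcardK⟩ := FiniteField.card K (ringChar K)
        rw [hchar3, hq] at hcardK
        have h3q : 3 ∣ q := hcardK ▸ dvd_pow_self 3 n.ne_zero
        omega
      have hne : a ≠ 1 - a := by
        intro hc
        apply h3K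
        have h2a : a + a = 1 := by linear_combination hc
        linear_combination -4 * hk - (2*a - 1) * h2a
      have e1 : a⁻¹ = 1 - a := inv_eq_of_mul_eq_one_right hk
      have e2 : (1 - a)⁻¹ = a := inv_eq_of_mul_eq_one_right (by linear_combination hk)
      have e3 : (a - 1) * a⁻¹ = a := by rw [e1]; linear_combination hk
      have e4 : a * (a - 1)⁻¹ = 1 - a := by
        have hi : (a - 1)⁻¹ = -a := by
          rw [show a - 1 = -(1 - a) by ring, inv_neg, e2]
        rw [hi]; linear_combination hk
      have hhex : hexagon a = {a, 1 - a} := by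
        rw [hexagon, e3, e4, e1, e2]
        ext z; simp only [Set.mem_insert_iff, Set.mem_singleton_iff]; tauto
      rw [hhex, Set.ncard_pair hne]
end

section
/- Let K be a finite field with q elements. The number of elements a ∈ K with a ∉ {0,1} whose hexagon H(a) has exactly six elements equals 6·⌊(q − 2)/6⌋. Equivalently, K has exactly ⌊(q − 2)/6⌋ hexagons of near-regular type. -/
section Helpers
variable {K : Type*} [Field K]

lemma mem_hexagon_iff {a x : K} : x ∈ hexagon a ↔
    x = a ∨ x = 1 - a ∨ x = a⁻¹ ∨ x = (1 - a)⁻¹ ∨ x = (a - 1) * a⁻¹ ∨ x = a * (a - 1)⁻¹ := by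
  simp [hexagon, Set.mem_insert_iff]

lemma mem_hexagon_self (a : K) : a ∈ hexagon a := by simp [hexagon]

lemma hexagon_one_sub (a : K) : hexagon (1 - a) = hexagon a := by
  have h1 : 1 - (1 - a) = a := by ring
  have h2 : 1 - a - 1 = -a := by ring
  have h3 : (1 - a - 1) * (1 - a)⁻¹ = a * (a - 1)⁻¹ := by
    rw [h2, show (1 : K) - a = -(a-1) by ring, inv_neg]; ring
  have h4 : (1 - a) * (1 - a - 1)⁻¹ = (a - 1) * a⁻¹ := by
    rw [h2, inv_neg]; ring
  unfold hexagon
  rw [h1, h3, h4]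
  ext x
  simp only [Set.mem_insert_iff, Set.mem_singleton_iff]
  tauto

lemma hexagon_inv {a : K} (ha : a ≠ 0) (ha1 : a ≠ 1) : hexagon a⁻¹ = hexagon a := by
  have ha1' : a - 1 ≠ 0 := sub_ne_zero.mpr ha1
  have h1 : (a⁻¹)⁻¹ = a := inv_inv a
  have h2 : 1 - a⁻¹ = (a - 1) * a⁻¹ := by field_simp
  have h3 : (1 - a⁻¹)⁻¹ = a * (a - 1)⁻¹ := by rw [h2, mul_inv, inv_inv]; ring
  have h4 : (a⁻¹ - 1) * (a⁻¹)⁻¹ = 1 - a := by field_simp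
  have h5 : a⁻¹ * (a⁻¹ - 1)⁻¹ = (1 - a)⁻¹ := by
    rw [show a⁻¹ - 1 = (1 - a) * a⁻¹ by field_simp, mul_inv, inv_inv]
    rcases eq_or_ne a 1 with h | h
    · simp [h]
    · have : (1:K) - a ≠ 0 := sub_ne_zero.mpr (Ne.symm h)
      field_simp
  unfold hexagon
  rw [h3, h4, h5, h1, h2]
  ext x
  simp only [Set.mem_insert_iff, Set.mem_singleton_iff]
  tauto
lemma hexagon_eq_of_mem {a b : K} (ha : a ≠ 0) (ha1 : a ≠ 1) (hb : b ∈ hexagon a) :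
    hexagon b = hexagon a := by
  have ha1' : a - 1 ≠ 0 := sub_ne_zero.mpr ha1
  have h1a : (1 : K) - a ≠ 0 := sub_ne_zero.mpr (Ne.symm ha1)
  rcases mem_hexagon_iff.mp hb with rfl | rfl | rfl | rfl | rfl | rfl
  · rfl
  · exact hexagon_one_sub a
  · exact hexagon_inv ha ha1
  · rw [hexagon_inv h1a (by intro h; exact ha (by linear_combination -h)), hexagon_one_sub]
  · rw [show (a - 1) * a⁻¹ = 1 - a⁻¹ by field_simp, hexagon_one_sub, hexagon_inv ha ha1]
  · have h6 : (1 : K) - a⁻¹ ≠ 0 := by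
      rw [show (1:K) - a⁻¹ = (a - 1) * a⁻¹ by field_simp]
      exact mul_ne_zero ha1' (inv_ne_zero ha)
    have h6' : (1 : K) - a⁻¹ ≠ 1 := by
      intro h
      exact ha (inv_eq_zero.mp (by linear_combination -h))
    rw [show a * (a - 1)⁻¹ = (1 - a⁻¹)⁻¹ by
        rw [show (1:K) - a⁻¹ = (a - 1) * a⁻¹ by field_simp, mul_inv, inv_inv]; ring,
      hexagon_inv h6 h6', hexagon_one_sub, hexagon_inv ha ha1]

lemma hexagon_mem_ne {a b : K} (ha : a ≠ 0) (ha1 : a ≠ 1) (hb : b ∈ hexagon a) :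
    b ≠ 0 ∧ b ≠ 1 := by
  have ha1' : a - 1 ≠ 0 := sub_ne_zero.mpr ha1
  have h1a : (1 : K) - a ≠ 0 := sub_ne_zero.mpr (Ne.symm ha1)
  rcases mem_hexagon_iff.mp hb with rfl | rfl | rfl | rfl | rfl | rfl
  · exact ⟨ha, ha1⟩
  · exact ⟨h1a, fun h => ha (by linear_combination -h)⟩
  · exact ⟨inv_ne_zero ha, fun h => ha1 (by rw [← inv_inv a, h, inv_one])⟩
  · refine ⟨inv_ne_zero h1a, fun h => ha ?_⟩
    have h' : (1 : K) - a = 1 := by rw [← inv_inv (1 - a), h, inv_one]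
    linear_combination -h' 
  · exact ⟨mul_ne_zero ha1' (inv_ne_zero ha), fun h => by field_simp at h; exact one_ne_zero (α := K) (by linear_combination -h)⟩
  · refine ⟨mul_ne_zero ha (inv_ne_zero ha1'), fun h => ?_⟩
    field_simp at h
    exact one_ne_zero (α := K) (by linear_combination h)
lemma ncard_le_five (x1 x2 x3 x4 x5 : K) : ({x1, x2, x3, x4, x5} : Set K).ncard ≤ 5 := by
  have h5 : ({x5} : Set K).ncard = 1 := Set.ncard_singleton x5
  have h4 := Set.ncard_insert_le x4 ({x5} : Set K)
  have h3 := Set.ncard_insert_le x3 ({x4, x5} : Set K)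
  have h2 := Set.ncard_insert_le x2 ({x3, x4, x5} : Set K)
  have h1 := Set.ncard_insert_le x1 ({x2, x3, x4, x5} : Set K)
  omega

lemma sq_eq_one_resolve {x : K} (h : x ^ 2 = 1) (hx : x ≠ 1) : x = -1 := by
  rcases mul_eq_zero.mp (show (x - 1) * (x + 1) = 0 by linear_combination h) with h' | h'
  · exact absurd (sub_eq_zero.mp h') hx
  · linear_combination h'

lemma hexagon_ncard_eq_six_iff {a : K} (ha : a ≠ 0) (ha1 : a ≠ 1) :
    (hexagon a).ncard = 6 ↔ (a ≠ -1 ∧ 2 * a ≠ 1 ∧ a ≠ 2 ∧ a ^ 2 - a + 1 ≠ 0) := by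
  have ha1' : a - 1 ≠ 0 := sub_ne_zero.mpr ha1
  have h1a : (1 : K) - a ≠ 0 := sub_ne_zero.mpr (Ne.symm ha1)
  have ia : a * a⁻¹ = 1 := mul_inv_cancel₀ ha
  have ib : (a - 1) * (a - 1)⁻¹ = 1 := mul_inv_cancel₀ ha1'
  have ic : (1 - a) * (1 - a)⁻¹ = 1 := mul_inv_cancel₀ h1a
  constructor
  · intro h6
    refine ⟨?_, ?_, ?_, ?_⟩ <;> intro hbad
    · -- a = -1 : duplicate a⁻¹ = a
      have hd : a⁻¹ = a := inv_eq_of_mul_eq_one_right (by rw [hbad]; ring)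
      have hs : hexagon a = {a, 1 - a, (1 - a)⁻¹, (a - 1) * a⁻¹, a * (a - 1)⁻¹} := by
        ext x
        simp only [hexagon, Set.mem_insert_iff, Set.mem_singleton_iff, hd]
        tauto
      rw [hs] at h6
      have := ncard_le_five (K := K) a (1 - a) (1 - a)⁻¹ ((a - 1) * a⁻¹) (a * (a - 1)⁻¹)
      omega
    · -- 2a = 1 : duplicate 1 - a = a
      have hd : 1 - a = a := by linear_combination -hbad
      have hs : hexagon a = {a, a⁻¹, (1 - a)⁻¹, (a - 1) * a⁻¹, a * (a - 1)⁻¹} := by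
        ext x
        simp only [hexagon, Set.mem_insert_iff, Set.mem_singleton_iff, hd]
        tauto
      rw [hs] at h6
      have := ncard_le_five (K := K) a a⁻¹ (1 - a)⁻¹ ((a - 1) * a⁻¹) (a * (a - 1)⁻¹)
      omega
    · -- a = 2 : duplicate a * (a-1)⁻¹ = a
      have hd : a * (a - 1)⁻¹ = a := by rw [show a - 1 = 1 by rw [hbad]; ring]; simp
      have hs : hexagon a = {a, 1 - a, a⁻¹, (1 - a)⁻¹, (a - 1) * a⁻¹} := by
        ext x
        simp only [hexagon, Set.mem_insert_iff, Set.mem_singleton_iff, hd]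
        tauto
      rw [hs] at h6
      have := ncard_le_five (K := K) a (1 - a) a⁻¹ (1 - a)⁻¹ ((a - 1) * a⁻¹)
      omega
    · -- a² - a + 1 = 0 : duplicate (1-a)⁻¹ = a
      have hd : (1 - a)⁻¹ = a := inv_eq_of_mul_eq_one_right (by linear_combination -hbad)
      have hs : hexagon a = {a, 1 - a, a⁻¹, (a - 1) * a⁻¹, a * (a - 1)⁻¹} := by
        ext x
        simp only [hexagon, Set.mem_insert_iff, Set.mem_singleton_iff, hd]
        tauto
      rw [hs] at h6
      have := ncard_le_five (K := K) a (1 - a) a⁻¹ ((a - 1) * a⁻¹) (a * (a - 1)⁻¹)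
      omega
  · rintro ⟨h1, h2, h3, h4⟩
    have d12 : a ≠ 1 - a := fun h => h2 (by linear_combination h)
    have d13 : a ≠ a⁻¹ := fun h =>
      h1 (sq_eq_one_resolve (by linear_combination a * h + ia) ha1)
    have d14 : a ≠ (1 - a)⁻¹ := fun h => h4 (by linear_combination (a - 1) * h - ic)
    have d15 : a ≠ (a - 1) * a⁻¹ := fun h => h4 (by linear_combination a * h + (a - 1) * ia)
    have d16 : a ≠ a * (a - 1)⁻¹ := fun h => by
      rcases mul_eq_zero.mp (show a * (a - 2) = 0 by
        linear_combination (a - 1) * h + a * ib) with h' | h'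
      · exact ha h'
      · exact h3 (by linear_combination h')
    have d23 : (1 : K) - a ≠ a⁻¹ := fun h => h4 (by linear_combination -(a * h) - ia)
    have d24 : (1 : K) - a ≠ (1 - a)⁻¹ := fun h => by
      rcases mul_eq_zero.mp (show a * (a - 2) = 0 by
        linear_combination (1 - a) * h + ic) with h' | h'
      · exact ha h'
      · exact h3 (by linear_combination h')
    have d25 : (1 : K) - a ≠ (a - 1) * a⁻¹ := fun h =>
      h1 (sq_eq_one_resolve (by linear_combination -(a * h) - (a - 1) * ia) ha1)
    have d26 : (1 : K) - a ≠ a * (a - 1)⁻¹ := fun h =>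
      h4 (by linear_combination -((a - 1) * h) - a * ib)
    have d34 : (a⁻¹ : K) ≠ (1 - a)⁻¹ := fun h =>
      h2 (by linear_combination (-(a * (1 - a))) * h + (1 - a) * ia + (-a) * ic)
    have d35 : (a⁻¹ : K) ≠ (a - 1) * a⁻¹ := fun h =>
      h3 (by linear_combination (-a) * h + (2 - a) * ia)
    have d36 : (a⁻¹ : K) ≠ a * (a - 1)⁻¹ := fun h =>
      h4 (by linear_combination (-(a * (a - 1))) * h + (a - 1) * ia + (-(a ^ 2)) * ib)
    have d45 : ((1 - a)⁻¹ : K) ≠ (a - 1) * a⁻¹ := fun h =>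
      h4 (by linear_combination (a * (1 - a)) * h + (-a) * ic + ((1 - a) * (a - 1)) * ia)
    have d46 : ((1 - a)⁻¹ : K) ≠ a * (a - 1)⁻¹ := fun h =>
      h1 (sq_eq_one_resolve (by
        linear_combination ((a - 1) * (1 - a)) * h + (-(a - 1)) * ic + (a * (1 - a)) * ib) ha1)
    have d56 : ((a - 1) * a⁻¹ : K) ≠ a * (a - 1)⁻¹ := fun h =>
      h2 (by linear_combination (-(a * (a - 1))) * h + ((a - 1) ^ 2) * ia + (-(a ^ 2)) * ib)
    unfold hexagon
    rw [Set.ncard_insert_of_notMem (by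
        simp only [Set.mem_insert_iff, Set.mem_singleton_iff]
        push_neg
        exact ⟨d12, d13, d14, d15, d16⟩) (Set.toFinite _),
      Set.ncard_insert_of_notMem (by
        simp only [Set.mem_insert_iff, Set.mem_singleton_iff]
        push_neg
        exact ⟨d23, d24, d25, d26⟩) (Set.toFinite _),
      Set.ncard_insert_of_notMem (by
        simp only [Set.mem_insert_iff, Set.mem_singleton_iff]
        push_neg
        exact ⟨d34, d35, d36⟩) (Set.toFinite _),
      Set.ncard_insert_of_notMem (by
        simp only [Set.mem_insert_iff, Set.mem_singleton_iff]
        push_neg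
        exact ⟨d45, d46⟩) (Set.toFinite _),
      Set.ncard_insert_of_notMem (by
        simp only [Set.mem_singleton_iff]
        exact d56) (Set.toFinite _),
      Set.ncard_singleton]
end Helpers
section FF
variable {K : Type*} [Field K] [Fintype K]

lemma cast_three_ne_zero (h3 : ringChar K ≠ 3) : (3 : K) ≠ 0 := by
  have hp : (ringChar K).Prime := CharP.char_is_prime K (ringChar K)
  intro h
  have : ringChar K ∣ 3 := (CharP.cast_eq_zero_iff K (ringChar K) 3).mp (by exact_mod_cast h)
  exact h3 ((Nat.prime_dvd_prime_iff_eq hp (by norm_num)).mp this)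

lemma roots_pair {u : K} (hu : u ^ 2 - u + 1 = 0) (h3 : ringChar K ≠ 3) :
    {x : K | x ^ 2 - x + 1 = 0} = {u, 1 - u} ∧ u ≠ 1 - u := by
  have h3K : (3 : K) ≠ 0 := cast_three_ne_zero h3
  constructor
  · ext x
    simp only [Set.mem_setOf_eq, Set.mem_insert_iff, Set.mem_singleton_iff]
    constructor
    · intro hx
      rcases mul_eq_zero.mp (show (x - u) * (x - (1 - u)) = 0 by linear_combination hx - hu)
        with h' | h'
      · exact Or.inl (sub_eq_zero.mp h')
      · exact Or.inr (sub_eq_zero.mp h')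
    · rintro (rfl | rfl)
      · exact hu
      · linear_combination hu
  · intro h
    exact h3K (by linear_combination 4 * hu - (2 * u - 1) * h)

lemma exists_root_iff (h3 : ringChar K ≠ 3) :
    (∃ u : K, u ^ 2 - u + 1 = 0) ↔ Fintype.card K % 3 = 1 := by
  classical
  have hq2 : 2 ≤ Fintype.card K := Fintype.one_lt_card
  have hcu : Fintype.card Kˣ = Fintype.card K - 1 := Fintype.card_units (α := K)
  constructor
  · rintro ⟨u, hu⟩
    have hw : (-u) ^ 2 + (-u) + 1 = 0 := by linear_combination hu
    have hw0 : -u ≠ 0 := by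
      intro h
      rw [show u = 0 by linear_combination -h] at hu
      simp at hu
    have hw1 : -u ≠ 1 := by
      intro h
      exact cast_three_ne_zero h3 (by linear_combination hw + (u - 2) * h)
    set wu : Kˣ := Units.mk0 (-u) hw0 with hwu
    have hcube : wu ^ 3 = 1 := by
      apply Units.ext
      rw [Units.val_pow_eq_pow_val, Units.val_one, hwu, Units.val_mk0]
      linear_combination ((-u) - 1) * hw
    have hne1 : wu ≠ 1 := by
      intro h
      apply hw1
      have := congrArg (Units.val) h
      simpa [hwu] using this
    have horder : orderOf wu = 3 :=
      orderOf_eq_prime hcube hne1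
    have hdvd : 3 ∣ Fintype.card Kˣ := horder ▸ orderOf_dvd_card
    rw [hcu] at hdvd
    omega
  · intro hq1
    have hdvd : 3 ∣ Fintype.card Kˣ := by rw [hcu]; omega
    obtain ⟨g, hg⟩ := IsCyclic.exists_ofOrder_eq_natCard (α := Kˣ)
    rw [Nat.card_eq_fintype_card] at hg
    obtain ⟨k, hk⟩ := hdvd
    have hk0 : k ≠ 0 := by
      intro h
      rw [h, mul_zero] at hk
      have := Fintype.card_pos (α := Kˣ)
      omega
    have horder : orderOf (g ^ k) = 3 := by
      rw [orderOf_pow, hg, hk, show (3 : ℕ) * k = 3 * k from rfl]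
      rw [show Nat.gcd (3 * k) k = k by
        rw [Nat.gcd_comm]; exact Nat.gcd_eq_left ⟨3, by ring⟩]
      have := Nat.pos_of_ne_zero hk0
      rw [Nat.mul_div_cancel _ this]
    set h := g ^ k
    have hcube : ((h : K)) ^ 3 = 1 := by
      have : h ^ 3 = 1 := by rw [← horder]; exact pow_orderOf_eq_one h
      have := congrArg (Units.val) this
      push_cast at this
      exact this
    have hne1 : (h : K) ≠ 1 := by
      intro hh
      have : h = 1 := Units.ext hh
      rw [this] at horder
      simp at horder
    rcases mul_eq_zero.mp (show ((h : K) - 1) * ((h : K) ^ 2 + (h : K) + 1) = 0 by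
      linear_combination hcube) with h' | h'
    · exact absurd (sub_eq_zero.mp h') hne1
    · exact ⟨-(h : K), by linear_combination h'⟩

end FF
section FF2
variable {K : Type*} [Field K] [Fintype K]

lemma bad_card :
    {a : K | a ≠ 0 ∧ a ≠ 1 ∧ (a = -1 ∨ 2 * a = 1 ∨ a = 2 ∨ a ^ 2 - a + 1 = 0)}.ncard
      = (Fintype.card K - 2) % 6 := by
  classical
  have hq2 : 2 ≤ Fintype.card K := Fintype.one_lt_card
  have hp : (ringChar K).Prime := CharP.char_is_prime K (ringChar K)
  obtain ⟨n, hp', hcard⟩ := FiniteField.card K (ringChar K)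
  have hpq : ringChar K ∣ Fintype.card K := by
    rw [hcard]; exact dvd_pow_self _ n.pos.ne'
  by_cases hp2 : ringChar K = 2
  · -- characteristic 2
    have h2K : (2 : K) = 0 := by
      have := CharP.cast_eq_zero K (ringChar K)
      rw [hp2] at this; exact_mod_cast this
    have hp3 : ringChar K ≠ 3 := by rw [hp2]; norm_num
    have hset : {a : K | a ≠ 0 ∧ a ≠ 1 ∧ (a = -1 ∨ 2 * a = 1 ∨ a = 2 ∨ a ^ 2 - a + 1 = 0)}
        = {x : K | x ^ 2 - x + 1 = 0} := by
      ext a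
      simp only [Set.mem_setOf_eq]
      constructor
      · rintro ⟨h0, h1, (h | h | h | h)⟩
        · exact absurd (show a = 1 by linear_combination h - h2K) h1
        · exact absurd (show (1 : K) = 0 by linear_combination -h + a * h2K) one_ne_zero
        · exact absurd (show a = 0 by linear_combination h + h2K) h0
        · exact h
      · intro h
        refine ⟨?_, ?_, Or.inr (Or.inr (Or.inr h))⟩
        · rintro rfl; norm_num at h
        · rintro rfl; norm_num at h
    rw [hset]
    have hq3 : Fintype.card K % 3 ≠ 0 := by
      intro h
      have h' : (3 : ℕ) ∣ Fintype.card K := Nat.dvd_of_mod_eq_zero h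
      rw [hcard, hp2] at h'
      have := Nat.Prime.dvd_of_dvd_pow (p := 3) (by norm_num) h'
      omega
    have h2q : 2 ∣ Fintype.card K := hp2 ▸ hpq
    rcases eq_or_ne (Fintype.card K % 3) 1 with h31 | h32
    · obtain ⟨u, hu⟩ := (exists_root_iff hp3).mpr h31
      obtain ⟨hR, hne⟩ := roots_pair hu hp3
      rw [hR, Set.ncard_pair hne]
      omega
    · have hR : {x : K | x ^ 2 - x + 1 = 0} = ∅ := by
        rw [Set.eq_empty_iff_forall_notMem]
        exact fun x hx => absurd ((exists_root_iff hp3).mp ⟨x, hx⟩) (by omega)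
      rw [hR, Set.ncard_empty]
      omega
  · by_cases hp3 : ringChar K = 3
    · -- characteristic 3
      have h3K : (3 : K) = 0 := by
        have := CharP.cast_eq_zero K (ringChar K)
        rw [hp3] at this; exact_mod_cast this
      have h2K : (2 : K) ≠ 0 := by
        intro h
        have := (CharP.cast_eq_zero_iff K (ringChar K) 2).mp (by exact_mod_cast h)
        rw [hp3] at this; omega
      have hset : {a : K | a ≠ 0 ∧ a ≠ 1 ∧ (a = -1 ∨ 2 * a = 1 ∨ a = 2 ∨ a ^ 2 - a + 1 = 0)}
          = {(-1 : K)} := by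
        ext a
        simp only [Set.mem_setOf_eq, Set.mem_singleton_iff]
        constructor
        · rintro ⟨h0, h1, (h | h | h | h)⟩
          · exact h
          · linear_combination 2 * h + (1 - a) * h3K
          · linear_combination h + h3K
          · have hsq : (a + 1) ^ 2 = 0 := by linear_combination h + a * h3K
            have := pow_eq_zero_iff (n := 2) (by norm_num) |>.mp hsq
            linear_combination this
        · rintro rfl
          refine ⟨by simp, ?_, Or.inl rfl⟩
          intro h
          exact h2K (by linear_combination -h)
      rw [hset, Set.ncard_singleton]
      have h3q : 3 ∣ Fintype.card K := hp3 ▸ hpq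
      have h2q : ¬ 2 ∣ Fintype.card K := by
        intro h
        rw [hcard, hp3] at h
        have := Nat.Prime.dvd_of_dvd_pow (p := 2) Nat.prime_two h
        omega
      omega
    · -- characteristic ≥ 5
      have h2K : (2 : K) ≠ 0 := by
        intro h
        have := (CharP.cast_eq_zero_iff K (ringChar K) 2).mp (by exact_mod_cast h)
        exact hp2 ((Nat.prime_dvd_prime_iff_eq hp (by norm_num)).mp this)
      have h3K : (3 : K) ≠ 0 := cast_three_ne_zero hp3
      have i2 : (2 : K) * 2⁻¹ = 1 := mul_inv_cancel₀ h2K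
      have hset : {a : K | a ≠ 0 ∧ a ≠ 1 ∧ (a = -1 ∨ 2 * a = 1 ∨ a = 2 ∨ a ^ 2 - a + 1 = 0)}
          = insert (-1 : K) (insert 2 (insert (2 : K)⁻¹ {x : K | x ^ 2 - x + 1 = 0})) := by
        ext a
        simp only [Set.mem_setOf_eq, Set.mem_insert_iff]
        constructor
        · rintro ⟨h0, h1, (h | h | h | h)⟩
          · exact Or.inl h
          · exact Or.inr (Or.inr (Or.inl (inv_eq_of_mul_eq_one_right h).symm))
          · exact Or.inr (Or.inl h)
          · exact Or.inr (Or.inr (Or.inr h))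
        · rintro (rfl | rfl | rfl | h)
          · exact ⟨by simp, fun h => h2K (by linear_combination -h), Or.inl rfl⟩
          · exact ⟨h2K, fun h => one_ne_zero (α := K) (by linear_combination h),
              Or.inr (Or.inr (Or.inl rfl))⟩
          · exact ⟨inv_ne_zero h2K, fun h => one_ne_zero (α := K) (by linear_combination i2 - 2 * h),
              Or.inr (Or.inl i2)⟩
          · refine ⟨?_, ?_, Or.inr (Or.inr (Or.inr h))⟩
            · rintro rfl; norm_num at h
            · rintro rfl; norm_num at h
      rw [hset]
      have m1 : (-1 : K) ∉ insert 2 (insert (2 : K)⁻¹ {x : K | x ^ 2 - x + 1 = 0}) := by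
        simp only [Set.mem_insert_iff, Set.mem_setOf_eq]
        push_neg
        refine ⟨fun h => h3K (by linear_combination -h),
          fun h => h3K (by linear_combination -2 * h - i2),
          fun h => h3K (by linear_combination h)⟩
      have m2 : (2 : K) ∉ insert (2 : K)⁻¹ {x : K | x ^ 2 - x + 1 = 0} := by
        simp only [Set.mem_insert_iff, Set.mem_setOf_eq]
        push_neg
        exact ⟨fun h => h3K (by linear_combination 2 * h + i2),
          fun h => h3K (by linear_combination h)⟩
      have m3 : (2 : K)⁻¹ ∉ {x : K | x ^ 2 - x + 1 = 0} := by
        intro h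
        simp only [Set.mem_setOf_eq] at h
        exact h3K (by linear_combination 4 * h + (1 - 2 * 2⁻¹) * i2)
      rw [Set.ncard_insert_of_notMem m1 (Set.toFinite _),
        Set.ncard_insert_of_notMem m2 (Set.toFinite _),
        Set.ncard_insert_of_notMem m3 (Set.toFinite _)]
      have hq3 : Fintype.card K % 3 ≠ 0 := by
        intro h
        have h' : (3 : ℕ) ∣ Fintype.card K := Nat.dvd_of_mod_eq_zero h
        rw [hcard] at h'
        have := Nat.Prime.dvd_of_dvd_pow (p := 3) (by norm_num) h'
        exact hp3 ((Nat.prime_dvd_prime_iff_eq (by norm_num) hp).mp this).symm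
      have h2q : ¬ 2 ∣ Fintype.card K := by
        intro h
        rw [hcard] at h
        have := Nat.Prime.dvd_of_dvd_pow (p := 2) Nat.prime_two h
        exact hp2 ((Nat.prime_dvd_prime_iff_eq Nat.prime_two hp).mp this).symm
      rcases eq_or_ne (Fintype.card K % 3) 1 with h31 | h32
      · obtain ⟨u, hu⟩ := (exists_root_iff hp3).mpr h31
        obtain ⟨hR, hne⟩ := roots_pair hu hp3
        rw [hR, Set.ncard_pair hne]
        omega
      · have hR : {x : K | x ^ 2 - x + 1 = 0} = ∅ := by
          rw [Set.eq_empty_iff_forall_notMem]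
          exact fun x hx => absurd ((exists_root_iff hp3).mp ⟨x, hx⟩) (by omega)
        rw [hR, Set.ncard_empty]
        omega

end FF2
/-- In a finite field with `q` elements, the number of elements `a ∉ {0,1}` whose
hexagon has exactly six elements is `6 * ⌊(q - 2) / 6⌋`; equivalently, there are
exactly `⌊(q - 2) / 6⌋` hexagons of near-regular type. -/
theorem card_near_regular_hexagons {K : Type*} [Field K] [Fintype K] (q : ℕ)
    (hq : Fintype.card K = q) :
    {a : K | a ≠ 0 ∧ a ≠ 1 ∧ (hexagon a).ncard = 6}.ncard = 6 * ((q - 2) / 6) ∧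
    {S : Set K | ∃ a : K, a ≠ 0 ∧ a ≠ 1 ∧ (hexagon a).ncard = 6 ∧ S = hexagon a}.ncard
      = (q - 2) / 6 := by
  classical
  set G : Set K := {a : K | a ≠ 0 ∧ a ≠ 1 ∧ (hexagon a).ncard = 6} with hGdef
  set T : Set K := {a : K | a ≠ 0 ∧ a ≠ 1} with hTdef
  have hq2 : 2 ≤ q := hq ▸ Fintype.one_lt_card
  have hsub : G ⊆ T := fun a ha => ⟨ha.1, ha.2.1⟩
  have hdiff : T \ G =
      {a : K | a ≠ 0 ∧ a ≠ 1 ∧ (a = -1 ∨ 2 * a = 1 ∨ a = 2 ∨ a ^ 2 - a + 1 = 0)} := by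
    ext a
    simp only [hGdef, hTdef, Set.mem_diff, Set.mem_setOf_eq]
    constructor
    · rintro ⟨⟨h0, h1⟩, hn⟩
      refine ⟨h0, h1, ?_⟩
      by_contra hor
      push_neg at hor
      exact hn ⟨h0, h1, (hexagon_ncard_eq_six_iff h0 h1).mpr hor⟩
    · rintro ⟨h0, h1, hor⟩
      refine ⟨⟨h0, h1⟩, fun hg => ?_⟩
      have := (hexagon_ncard_eq_six_iff h0 h1).mp hg.2.2
      tauto
  have hT : T.ncard = q - 2 := by
    have hTu : T = Set.univ \ ({0, 1} : Set K) := by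
      ext a
      simp only [hTdef, Set.mem_setOf_eq, Set.mem_diff, Set.mem_univ, Set.mem_insert_iff,
        Set.mem_singleton_iff, true_and]
      tauto
    rw [hTu, Set.ncard_diff (Set.subset_univ _) (Set.toFinite _), Set.ncard_univ,
      Nat.card_eq_fintype_card, hq, Set.ncard_pair (zero_ne_one (α := K))]
  have hpart : (T \ G).ncard + G.ncard = T.ncard :=
    Set.ncard_diff_add_ncard_of_subset hsub (Set.toFinite _)
  rw [hdiff, bad_card, hq, hT] at hpart
  have part1 : G.ncard = 6 * ((q - 2) / 6) := by omega
  refine ⟨part1, ?_⟩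
  -- second part
  have hGfin : G.Finite := Set.toFinite _
  set Gf : Finset K := hGfin.toFinset with hGf
  set Hf : Finset (Set K) := Gf.image hexagon with hHf
  have key : ∀ S ∈ Hf, (Gf.filter (fun a => hexagon a = S)).card = 6 := by
    intro S hS
    obtain ⟨a₀, ha₀G, rfl⟩ := Finset.mem_image.mp hS
    have ha₀ : a₀ ∈ G := (Set.Finite.mem_toFinset _).mp ha₀G
    have hfib : ↑(Gf.filter (fun a => hexagon a = hexagon a₀)) = hexagon a₀ := by
      ext b
      simp only [Finset.coe_filter, Set.mem_setOf_eq, hGf, Set.Finite.mem_toFinset]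
      constructor
      · rintro ⟨hbG, hbe⟩
        rw [← hbe]
        exact mem_hexagon_self b
      · intro hb
        obtain ⟨hb0, hb1⟩ := hexagon_mem_ne ha₀.1 ha₀.2.1 hb
        have he := hexagon_eq_of_mem ha₀.1 ha₀.2.1 hb
        exact ⟨⟨hb0, hb1, he ▸ ha₀.2.2⟩, he⟩
    have hc := Set.ncard_coe_finset (Gf.filter (fun a => hexagon a = hexagon a₀))
    rw [hfib] at hc
    rw [← hc]
    exact ha₀.2.2
  have hcardsum : Gf.card = Hf.card * 6 := by
    rw [Finset.card_eq_sum_card_fiberwise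
      (fun a ha => Finset.mem_image_of_mem hexagon ha : ∀ a ∈ Gf, hexagon a ∈ Hf)]
    rw [Finset.sum_congr rfl key, Finset.sum_const, smul_eq_mul]
  have hGG : G.ncard = Gf.card := by
    rw [← Set.ncard_coe_finset Gf, Set.Finite.coe_toFinset]
  have hH : {S : Set K | ∃ a : K, a ≠ 0 ∧ a ≠ 1 ∧ (hexagon a).ncard = 6 ∧ S = hexagon a}
      = ↑Hf := by
    ext S
    simp only [hHf, Finset.coe_image, Set.mem_image, Finset.mem_coe, hGf,
      Set.Finite.mem_toFinset, Set.mem_setOf_eq, hGdef]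
    constructor
    · rintro ⟨a, h0, h1, h6, rfl⟩
      exact ⟨a, ⟨h0, h1, h6⟩, rfl⟩
    · rintro ⟨a, ⟨h0, h1, h6⟩, rfl⟩
      exact ⟨a, h0, h1, h6, rfl⟩
  rw [hH, Set.ncard_coe_finset]
  rw [hGG, hcardsum] at part1
  omega
end

section
/- A finite matroid M is regular, i.e., representable over every field, if and only if M is representable over the field with 2 elements and representable over the field with 3 elements. -/
set_option maxHeartbeats 1600000

/-- A matroid `M` is representable over a field `F` if there is a map `φ` from the
ground set to an `F`-vector space such that a set is independent in `M` exactly when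
it lies in the ground set and its image family under `φ` is linearly independent. -/
def Matroid.IsRepresentableOver {α : Type*} (M : Matroid α) (F : Type*) [Field F] : Prop :=
  ∃ (ι : Type) (φ : α → ι →₀ F), ∀ I : Set α,
    M.Indep I ↔ I ⊆ M.E ∧ LinearIndependent F (fun x : I => φ x)

namespace TutteAux
open Matrix Function Set


variable {R : Type*} [CommRing R]

/-- Chio pivot: eliminate row/column 0 using pivot entry `S 0 0` (assumed to square to 1). -/
def piv {r : ℕ} (S : Matrix (Fin (r+1)) (Fin (r+1)) R) : Matrix (Fin r) (Fin r) R :=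
  fun a b => S a.succ b.succ - S a.succ 0 * S 0 0 * S 0 b.succ

theorem det_piv {r : ℕ} (S : Matrix (Fin (r+1)) (Fin (r+1)) R) (h : S 0 0 * S 0 0 = 1) :
    det S = S 0 0 * det (piv S) := by
  classical
  set T : Matrix (Fin (r+1)) (Fin (r+1)) R :=
    fun i j => S i j - (if i = 0 then (0:R) else S i 0 * S 0 0) * S 0 j with hT
  have hdet : det T = det S := by
    apply det_eq_of_forall_row_eq_smul_add_const
      (fun i => -(if i = 0 then (0:R) else S i 0 * S 0 0)) 0 (by simp)
    intro i j
    simp [hT]; ring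
  have hT0 : ∀ i : Fin (r+1), i ≠ 0 → T i 0 = 0 := by
    intro i hi
    simp only [hT, if_neg hi]
    rw [mul_assoc, h]; ring
  have hT00 : T 0 0 = S 0 0 := by simp [hT]
  rw [← hdet, det_succ_column_zero]
  rw [Finset.sum_eq_single 0]
  · have : T.submatrix (Fin.succAbove 0) Fin.succ = piv S := by
      ext a b
      simp only [submatrix_apply, Fin.zero_succAbove, piv, hT]
      simp [submatrix, Fin.succ_ne_zero]
    rw [hT00, this]
    simp
  · intro i _ hi
    rw [hT0 i hi]; ring
  · intro h; exact absurd (Finset.mem_univ _) h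

theorem piv_submatrix {r k : ℕ} (S : Matrix (Fin (r+1)) (Fin (r+1)) R) (f g : Fin k → Fin r) :
    (piv S).submatrix f g
      = piv (S.submatrix (Fin.cons 0 (Fin.succ ∘ f)) (Fin.cons 0 (Fin.succ ∘ g))) := by
  ext a b
  simp [piv, Fin.cons_succ, Fin.cons_zero]

theorem cons_injective {k r : ℕ} {f : Fin k → Fin r} (hf : Injective f) :
    Injective (Fin.cons 0 (Fin.succ ∘ f) : Fin (k+1) → Fin (r+1)) := by
  intro a b hab
  induction a using Fin.cases <;> induction b using Fin.cases <;>
    simp_all [Fin.cons_succ, Fin.cons_zero]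
  · exact absurd hab.symm (Fin.succ_ne_zero _)
  · exact hf hab


theorem dvd_iff_of_sign {d x ε : ℤ} (hε : ε = 1 ∨ ε = -1) : d ∣ ε * x ↔ d ∣ x := by
  rcases hε with h | h <;> simp [h, dvd_neg]

theorem vec_pair_injective {n : ℕ} (a : Fin n) :
    Injective (![0, a.succ] : Fin 2 → Fin (n+1)) := by
  have h : (![0, a.succ] : Fin 2 → Fin (n+1))
      = Fin.cons 0 (Fin.succ ∘ fun _ : Fin 1 => a) := by
    funext x
    induction x using Fin.cases with
    | zero => rfl
    | succ i =>
      rw [Fin.cons_succ]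
      have : i = 0 := Subsingleton.elim _ _
      subst this
      rfl
  rw [h]
  exact cons_injective (fun x y _ => Subsingleton.elim x y)

/-- Key number-theoretic TU induction: a square `{0,±1}` integer matrix all of whose
square submatrices have determinant divisible by 2 iff divisible by 3 has
determinant in `{0,1,-1}`. -/
theorem tu_main : ∀ (k : ℕ) (S : Matrix (Fin k) (Fin k) ℤ),
    (∀ i j, S i j = 0 ∨ S i j = 1 ∨ S i j = -1) →
    (∀ (j : ℕ) (f g : Fin j → Fin k), Injective f → Injective g →
      ((2:ℤ) ∣ (S.submatrix f g).det ↔ (3:ℤ) ∣ (S.submatrix f g).det)) →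
    S.det = 0 ∨ S.det = 1 ∨ S.det = -1 := by
  intro k
  induction k using Nat.strong_induction_on with
  | _ k IH =>
  intro S hent hdvd
  match k, IH with
  | 0, _ => right; left; exact det_fin_zero
  | 1, _ => simpa [det_fin_one] using hent 0 0
  | 2, _ =>
      have h00 := hent 0 0; have h01 := hent 0 1
      have h10 := hent 1 0; have h11 := hent 1 1
      have hd := hdvd 2 id id injective_id injective_id
      simp only [submatrix_id_id] at hd
      rw [det_fin_two] at hd ⊢
      rcases h00 with h|h|h <;> rcases h01 with h'|h'|h' <;> rcases h10 with h''|h''|h'' <;>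
        rcases h11 with h'''|h'''|h''' <;>
        rw [h, h', h'', h'''] at hd ⊢ <;> omega
  | (r+3), IH =>
      by_cases h0 : ∀ i j, S i j = 0
      · left
        have hS : S = 0 := by ext i j; exact h0 i j
        rw [hS, det_zero]
      push_neg at h0
      obtain ⟨i₀, j₀, hij⟩ := h0
      set S₁ : Matrix (Fin (r+3)) (Fin (r+3)) ℤ :=
        S.submatrix (Equiv.swap 0 i₀) (Equiv.swap 0 j₀) with hS₁
      -- determinant relation
      have hsign : ∃ ε : ℤ, (ε = 1 ∨ ε = -1) ∧ S₁.det = ε * S.det := by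
        have h1 : S₁ = (S.submatrix id (Equiv.swap 0 j₀)).submatrix (Equiv.swap 0 i₀) id := by
          ext i j; simp [hS₁]
        rw [h1, det_permute, det_permute']
        refine ⟨((Equiv.Perm.sign (Equiv.swap 0 i₀) : ℤˣ) : ℤ) *
          ((Equiv.Perm.sign (Equiv.swap 0 j₀) : ℤˣ) : ℤ), ?_, by push_cast; ring⟩
        rcases Int.units_eq_one_or (Equiv.Perm.sign (Equiv.swap 0 i₀)) with h|h <;>
          rcases Int.units_eq_one_or (Equiv.Perm.sign (Equiv.swap 0 j₀)) with h'|h' <;>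
          rw [h, h'] <;> norm_num
      have hent₁ : ∀ i j, S₁ i j = 0 ∨ S₁ i j = 1 ∨ S₁ i j = -1 := fun i j => hent _ _
      have hdvd₁ : ∀ (j : ℕ) (f g : Fin j → Fin (r+3)), Injective f → Injective g →
          ((2:ℤ) ∣ (S₁.submatrix f g).det ↔ (3:ℤ) ∣ (S₁.submatrix f g).det) := by
        intro j f g hf hg
        rw [hS₁, submatrix_submatrix]
        exact hdvd j _ _ ((Equiv.swap 0 i₀).injective.comp hf)
          ((Equiv.swap 0 j₀).injective.comp hg)
      have hpivot : S₁ 0 0 = 1 ∨ S₁ 0 0 = -1 := by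
        have h00 : S₁ 0 0 = S i₀ j₀ := by
          simp [hS₁, Equiv.swap_apply_left]
        rw [h00]
        rcases hent i₀ j₀ with h|h|h
        · exact absurd h hij
        · exact Or.inl h
        · exact Or.inr h
      have hq : S₁ 0 0 * S₁ 0 0 = 1 := by rcases hpivot with h|h <;> rw [h] <;> ring
      -- 2×2 subdeterminants of S₁ are 0 or ±1
      have h2 : ∀ (f g : Fin 2 → Fin (r+3)), Injective f → Injective g →
          ((S₁.submatrix f g).det = 0 ∨ (S₁.submatrix f g).det = 1 ∨
            (S₁.submatrix f g).det = -1) := by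
        intro f g hf hg
        refine IH 2 (by omega) _ (fun i j => hent₁ _ _) ?_
        intro j f' g' hf' hg'
        rw [submatrix_submatrix]
        exact hdvd₁ j _ _ (hf.comp hf') (hg.comp hg')
      have hvecinj : ∀ a : Fin (r+2), Injective (![0, a.succ] : Fin 2 → Fin (r+3)) :=
        fun a => vec_pair_injective a
      have hpent : ∀ a b, piv S₁ a b = 0 ∨ piv S₁ a b = 1 ∨ piv S₁ a b = -1 := by
        intro a b
        have hform : piv S₁ a b = S₁ 0 0 * (S₁.submatrix ![0, a.succ] ![0, b.succ]).det := by
          rw [det_fin_two]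
          simp only [submatrix_apply, Matrix.cons_val_zero, Matrix.cons_val_one,
            Matrix.head_cons, piv]
          rw [mul_sub, ← mul_assoc, hq, one_mul]
          ring
        have hd2 := h2 ![0, a.succ] ![0, b.succ] (hvecinj a) (hvecinj b)
        rw [hform]
        rcases hpivot with h|h <;> rcases hd2 with h'|h'|h' <;> rw [h, h'] <;> norm_num
      have hpdvd : ∀ (j : ℕ) (f g : Fin j → Fin (r+2)), Injective f → Injective g →
          ((2:ℤ) ∣ ((piv S₁).submatrix f g).det ↔ (3:ℤ) ∣ ((piv S₁).submatrix f g).det) := by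
        intro j f g hf hg
        rw [piv_submatrix]
        set T := S₁.submatrix (Fin.cons 0 (Fin.succ ∘ f)) (Fin.cons 0 (Fin.succ ∘ g)) with hTdef
        have h00 : T 0 0 = S₁ 0 0 := by simp [hTdef, Fin.cons_zero]
        have hdet : det T = S₁ 0 0 * det (piv T) := by
          rw [← h00]; exact det_piv T (by rw [h00]; exact hq)
        have hmul : ∀ d : ℤ, (d ∣ det (piv T) ↔ d ∣ det T) := by
          intro d
          rw [hdet, dvd_iff_of_sign hpivot]
        rw [hmul 2, hmul 3, hTdef]
        exact hdvd₁ _ _ _ (cons_injective hf) (cons_injective hg)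
      have hpiv := IH (r+2) (by omega) (piv S₁) hpent hpdvd
      have hdS₁ : det S₁ = S₁ 0 0 * det (piv S₁) := det_piv S₁ hq
      obtain ⟨ε, hε, hεeq⟩ := hsign
      rw [hdS₁] at hεeq
      rcases hε with h|h <;> rcases hpivot with h'|h' <;> rcases hpiv with h''|h''|h'' <;>
        rw [h, h', h''] at hεeq <;> omega




theorem lin_indep_iff_det {α F : Type*} [Field F] {B₀ X Y : Set α}
    (hBf : B₀.Finite) {c : α → ↥B₀ → F}
    (hc1 : ∀ (a : α) (ha : a ∈ B₀), c a ⟨a, ha⟩ = 1)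
    (hc0 : ∀ (a : α), a ∈ B₀ → ∀ (b' : ↥B₀), (↑b' : α) ≠ a → c a b' = 0)
    (hX : X ⊆ B₀) (hY : Disjoint Y B₀) [Fintype ↥X] [DecidableEq ↥X] (σ : ↥X ≃ ↥Y) :
    LinearIndependent F (fun k : ↥((B₀ \ X) ∪ Y) => c ↑k) ↔
      (Matrix.of fun x x' : ↥X => c ↑(σ x') ⟨↑x, hX x.2⟩).det ≠ 0 := by
  classical
  set D : Set α := B₀ \ X with hD
  haveI : Fintype ↥D := (hBf.subset diff_subset).fintype
  have hDX : ∀ (d : ↥D) (x : ↥X), (↑d : α) ≠ ↑x := by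
    intro d x h
    exact d.2.2 (show (↑d : α) ∈ X by rw [h]; exact x.2)
  have hDY : ∀ (d : ↥D) (y : ↥Y), (↑d : α) ≠ ↑y := by
    intro d y h
    exact Set.disjoint_left.mp hY (show (↑d : α) ∈ Y by rw [h]; exact y.2) d.2.1
  -- column index bijection
  set j : ↥D ⊕ ↥Y → α := Sum.elim Subtype.val Subtype.val with hj
  have hjmem : ∀ s, j s ∈ D ∪ Y := by rintro (d | y); exacts [Or.inl d.2, Or.inr y.2]
  have hjinj : Injective j := by
    rintro (d | y) (d' | y') h
    · exact congrArg Sum.inl (Subtype.ext h)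
    · exact absurd h (hDY d y')
    · exact absurd h.symm (hDY d' y)
    · exact congrArg Sum.inr (Subtype.ext h)
  let e : ↥D ⊕ ↥Y ≃ ↥(D ∪ Y) := Equiv.ofBijective (fun s => ⟨j s, hjmem s⟩)
    ⟨fun a b h => hjinj (congrArg Subtype.val h), by
      rintro ⟨k, hk | hk⟩
      · exact ⟨Sum.inl ⟨k, hk⟩, rfl⟩
      · exact ⟨Sum.inr ⟨k, hk⟩, rfl⟩⟩
  have h1 : LinearIndependent F (fun k : ↥(D ∪ Y) => c ↑k)
      ↔ LinearIndependent F (fun s : ↥D ⊕ ↥Y => c (j s)) :=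
    (linearIndependent_equiv' e rfl).symm
  set e₂ : ↥D ⊕ ↥X ≃ ↥D ⊕ ↥Y := Equiv.sumCongr (Equiv.refl _) σ with he₂
  have h2 : LinearIndependent F (fun s : ↥D ⊕ ↥Y => c (j s))
      ↔ LinearIndependent F (fun t : ↥D ⊕ ↥X => c (j (e₂ t))) :=
    (linearIndependent_equiv e₂).symm
  -- row bijection
  set rB : ↥D ⊕ ↥X → ↥B₀ := Sum.elim (fun d => ⟨↑d, d.2.1⟩) (fun x => ⟨↑x, hX x.2⟩) with hrB
  have hrBbij : Bijective rB := by
    constructor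
    · rintro (d | x) (d' | x') h
      · exact congrArg Sum.inl (Subtype.ext
          (show (↑d : α) = ↑d' from congrArg (Subtype.val : ↥B₀ → α) h))
      · exact absurd (show (↑d : α) = ↑x' from congrArg (Subtype.val : ↥B₀ → α) h) (hDX d x')
      · exact absurd (show (↑x : α) = ↑d' from congrArg (Subtype.val : ↥B₀ → α) h).symm (hDX d' x)
      · exact congrArg Sum.inr (Subtype.ext
          (show (↑x : α) = ↑x' from congrArg (Subtype.val : ↥B₀ → α) h))
    · rintro ⟨b, hb⟩
      by_cases hbX : b ∈ X
      · exact ⟨Sum.inr ⟨b, hbX⟩, rfl⟩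
      · exact ⟨Sum.inl ⟨b, ⟨hb, hbX⟩⟩, rfl⟩
  set eB : ↥D ⊕ ↥X ≃ ↥B₀ := Equiv.ofBijective rB hrBbij with heB
  set P : Matrix (↥D ⊕ ↥X) (↥D ⊕ ↥X) F := Matrix.of fun r t => c (j (e₂ t)) (eB r) with hP
  have h3 : LinearIndependent F (fun t : ↥D ⊕ ↥X => c (j (e₂ t)))
      ↔ LinearIndependent F (fun t => Pᵀ t) := by
    have hPt : (fun t : ↥D ⊕ ↥X => Pᵀ t)
        = (⇑(LinearEquiv.funCongrLeft F F eB)) ∘ (fun t => c (j (e₂ t))) := by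
      funext t; funext r; rfl
    rw [hPt]
    exact (LinearMap.linearIndependent_iff (LinearEquiv.funCongrLeft F F eB).toLinearMap
      (LinearEquiv.ker _)).symm
  have h4 : LinearIndependent F (fun t => Pᵀ t) ↔ IsUnit P :=
    linearIndependent_cols_iff_isUnit
  have h5 : P = Matrix.fromBlocks 1
      (Matrix.of fun (d : ↥D) (x' : ↥X) => c ↑(σ x') ⟨↑d, d.2.1⟩) 0
      (Matrix.of fun x x' : ↥X => c ↑(σ x') ⟨↑x, hX x.2⟩) := by
    ext r t
    rcases r with d | x <;> rcases t with d' | x'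
    · show c ↑d' ⟨↑d, d.2.1⟩ = (1 : Matrix ↥D ↥D F) d d'
      by_cases h : d = d'
      · subst h
        rw [Matrix.one_apply_eq]
        exact hc1 ↑d d.2.1
      · rw [Matrix.one_apply_ne h]
        exact hc0 ↑d' d'.2.1 ⟨↑d, d.2.1⟩
          (fun hh => h (Subtype.ext (hh.trans (congrArg Subtype.val (rfl : d' = d')))))
    · rfl
    · show c ↑d' ⟨↑x, hX x.2⟩ = (0 : Matrix ↥X ↥D F) x d'
      rw [Matrix.zero_apply]
      exact hc0 ↑d' d'.2.1 ⟨↑x, hX x.2⟩ (fun hh => hDX d' x hh.symm)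
    · rfl
  have h6 : P.det = (Matrix.of fun x x' : ↥X => c ↑(σ x') ⟨↑x, hX x.2⟩).det := by
    rw [h5, det_fromBlocks_zero₂₁, det_one, one_mul]
  rw [h1, h2, h3, h4, Matrix.isUnit_iff_isUnit_det, isUnit_iff_ne_zero, h6]





/-- `c` is a standard-form representation of `M` with respect to the base `B₀`. -/
def Std {α : Type*} (M : Matroid α) (B₀ : Set α) (F : Type*) [Field F]
    (c : α → ↥B₀ → F) : Prop :=
  (∀ (a : α) (ha : a ∈ B₀), c a ⟨a, ha⟩ = 1) ∧
  (∀ (a : α), a ∈ B₀ → ∀ (b' : ↥B₀), (↑b' : α) ≠ a → c a b' = 0) ∧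
  (∀ I : Set α, I ⊆ M.E → (M.Indep I ↔ LinearIndependent F (fun x : ↥I => c ↑x)))

theorem exists_std_aux {α F V : Type*} [Field F] [AddCommGroup V] [Module F V]
    {M : Matroid α} (φ : α → V)
    (hφ : ∀ I : Set α, M.Indep I ↔ I ⊆ M.E ∧ LinearIndependent F (fun x : I => φ x))
    {B₀ : Set α} (hB₀ : M.IsBase B₀)
    (hfin : B₀.Finite) : ∃ c : α → ↥B₀ → F, Std M B₀ F c := by
  classical
  haveI : Fintype ↥B₀ := hfin.fintype
  have hBE : B₀ ⊆ M.E := hB₀.subset_ground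
  have hli : LinearIndependent F (fun b : ↥B₀ => φ ↑b) := ((hφ B₀).mp hB₀.indep).2
  set W := Submodule.span F (Set.range fun b : ↥B₀ => φ ↑b) with hW
  have hrange : (Set.range fun b : ↥B₀ => φ ↑b) = φ '' B₀ := (Set.image_eq_range φ B₀).symm
  have hinj : Set.InjOn φ B₀ := by
    intro x hx y hy hxy
    exact congrArg Subtype.val (hli.injective (a₁ := ⟨x, hx⟩) (a₂ := ⟨y, hy⟩) hxy)
  have hmem : ∀ a ∈ M.E, φ a ∈ W := by
    intro a ha
    by_cases haB : a ∈ B₀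
    · exact Submodule.subset_span ⟨⟨a, haB⟩, rfl⟩
    by_contra hout
    have hnotmem : φ a ∉ Submodule.span F (φ '' B₀) := by rwa [← hrange]
    have hset : LinearIndependent F ((↑) : ↥(φ '' B₀) → V) :=
      (linearIndepOn_iff_image hinj).mp hli
    have hins : LinearIndependent F ((↑) : ↥(insert (φ a) (φ '' B₀)) → V) :=
      LinearIndepOn.id_insert hset hnotmem
    have hinj2 : Set.InjOn φ (insert a B₀) := by
      intro x hx y hy hxy
      rcases hx with rfl | hx
      · rcases hy with rfl | hy
        · rfl
        · exact absurd (Submodule.subset_span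
            (show φ x ∈ φ '' B₀ from ⟨y, hy, hxy.symm⟩)) hnotmem
      · rcases hy with rfl | hy
        · exact absurd (Submodule.subset_span
            (show φ y ∈ φ '' B₀ from ⟨x, hx, hxy⟩)) hnotmem
        · exact hinj hx hy hxy
    have hfam : LinearIndependent F (fun x : ↥(insert a B₀) => φ ↑x) := by
      refine (linearIndepOn_iff_image hinj2).mpr ?_
      rw [Set.image_insert_eq]
      exact hins
    have hIE : insert a B₀ ⊆ M.E := insert_subset ha hBE
    exact (hB₀.insert_dep ⟨ha, haB⟩).not_indep ((hφ _).mpr ⟨hIE, hfam⟩)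
  set bW : Module.Basis ↥B₀ F ↥W := Module.Basis.span hli with hbW
  set cfun : α → ↥B₀ → F :=
    (fun a => if h : φ a ∈ W then (fun b => bW.repr ⟨φ a, h⟩ b) else 0) with hcfun
  have hd : ∀ (a : α) (h : φ a ∈ W), cfun a = fun b => bW.repr ⟨φ a, h⟩ b := by
    intro a h
    simp only [hcfun]
    rw [dif_pos h]
  refine ⟨cfun, ?_, ?_, ?_⟩
  · intro a ha
    rw [hd a (hmem a (hBE ha))]
    have hb : (⟨φ a, hmem a (hBE ha)⟩ : ↥W) = bW ⟨a, ha⟩ :=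
      (Module.Basis.span_apply hli ⟨a, ha⟩).symm
    rw [hb, Module.Basis.repr_self]
    exact Finsupp.single_eq_same
  · intro a ha b' hb'
    rw [hd a (hmem a (hBE ha))]
    have hb : (⟨φ a, hmem a (hBE ha)⟩ : ↥W) = bW ⟨a, ha⟩ :=
      (Module.Basis.span_apply hli ⟨a, ha⟩).symm
    rw [hb, Module.Basis.repr_self]
    exact Finsupp.single_eq_of_ne' (fun h => hb' (congrArg Subtype.val h).symm)
  · intro I hIE
    rw [hφ I, and_iff_right hIE]
    set v1 : ↥I → ↥W := fun x => ⟨φ ↑x, hmem ↑x (hIE x.2)⟩ with hv1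
    have s1 : LinearIndependent F (fun x : ↥I => φ ↑x) ↔ LinearIndependent F v1 := by
      have e1 : (fun x : ↥I => φ ↑x) = ⇑W.subtype ∘ v1 := rfl
      rw [e1]
      exact LinearMap.linearIndependent_iff (v := v1) W.subtype (Submodule.ker_subtype W)
    have s2 : LinearIndependent F v1 ↔
        LinearIndependent F (⇑bW.repr.toLinearMap ∘ v1) :=
      (LinearMap.linearIndependent_iff (v := v1) bW.repr.toLinearMap
        (LinearEquiv.ker bW.repr)).symm
    have s3 : LinearIndependent F (⇑bW.repr.toLinearMap ∘ v1) ↔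
        LinearIndependent F (⇑(Finsupp.linearEquivFunOnFinite F F ↥B₀).toLinearMap ∘
          (⇑bW.repr.toLinearMap ∘ v1)) :=
      (LinearMap.linearIndependent_iff (v := ⇑bW.repr.toLinearMap ∘ v1)
        (Finsupp.linearEquivFunOnFinite F F ↥B₀).toLinearMap
        (LinearEquiv.ker (Finsupp.linearEquivFunOnFinite F F ↥B₀))).symm
    have e4 : (⇑(Finsupp.linearEquivFunOnFinite F F ↥B₀).toLinearMap ∘
          (⇑bW.repr.toLinearMap ∘ v1)) = (fun x : ↥I => cfun ↑x) := by
      funext x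
      rw [hd ↑x (hmem ↑x (hIE x.2))]
      rfl
    rw [s1, s2, s3, e4]

theorem exists_std {α : Type*} {F : Type*} [Field F] {M : Matroid α}
    (hM : _root_.Matroid.IsRepresentableOver M F) {B₀ : Set α} (hB₀ : M.IsBase B₀)
    (hfin : B₀.Finite) : ∃ c : α → ↥B₀ → F, Std M B₀ F c := by
  obtain ⟨ι, φ, hφ⟩ := hM
  exact exists_std_aux φ hφ hB₀ hfin

theorem rep_of_std {α : Type*} {F : Type*} [Field F] {M : Matroid α} {B₀ : Set α}
    (hfin : B₀.Finite) {c : α → ↥B₀ → F} (hstd : Std M B₀ F c) :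
    _root_.Matroid.IsRepresentableOver M F := by
  classical
  haveI : Fintype ↥B₀ := hfin.fintype
  set n := Fintype.card ↥B₀ with hn
  set en : ↥B₀ ≃ Fin n := Fintype.equivFin ↥B₀ with hen
  set g : (↥B₀ → F) ≃ₗ[F] (Fin n →₀ F) :=
    (LinearEquiv.funCongrLeft F F en.symm).trans
      (Finsupp.linearEquivFunOnFinite F F (Fin n)).symm with hg
  refine ⟨Fin n, fun a => g (c a), ?_⟩
  intro I
  have key : ∀ (hIE : I ⊆ M.E), (LinearIndependent F (fun x : ↥I => g (c ↑x)) ↔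
      LinearIndependent F (fun x : ↥I => c ↑x)) := by
    intro hIE
    exact LinearMap.linearIndependent_iff g.toLinearMap (LinearEquiv.ker _)
  constructor
  · intro hI
    have hIE := hI.subset_ground
    exact ⟨hIE, (key hIE).mpr ((hstd.2.2 I hIE).mp hI)⟩
  · rintro ⟨hIE, h⟩
    exact (hstd.2.2 I hIE).mpr ((key hIE).mp h)




theorem extend_lin {α F : Type*} [Field F] {B₀ I : Set α} (hBf : B₀.Finite)
    [Fintype ↥B₀] {c : α → ↥B₀ → F}
    (hc1 : ∀ (a : α) (ha : a ∈ B₀), c a ⟨a, ha⟩ = 1)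
    (hc0 : ∀ (a : α), a ∈ B₀ → ∀ (b' : ↥B₀), (↑b' : α) ≠ a → c a b' = 0)
    (hIf : I.Finite)
    (h : LinearIndependent F (fun x : ↥I => c ↑x)) :
    ∃ K, I ⊆ K ∧ K ⊆ I ∪ B₀ ∧ K.ncard = B₀.ncard ∧
      LinearIndependent F (fun x : ↥K => c ↑x) := by
  classical
  have hinjI : InjOn c I := fun x hx y hy hxy =>
    congrArg Subtype.val (h.injective (a₁ := ⟨x, hx⟩) (a₂ := ⟨y, hy⟩) hxy)
  have hsetI : LinearIndependent F ((↑) : ↥(c '' I) → (↥B₀ → F)) :=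
    (linearIndepOn_iff_image hinjI).mp h
  have hsub : c '' I ⊆ c '' (I ∪ B₀) := image_mono subset_union_left
  obtain ⟨b, hbt, hsb, hspan, hbli⟩ := exists_linearIndepOn_id_extension hsetI hsub
  -- the units are in the span of `b`
  have hcunit : ∀ bb : ↥B₀, c ↑bb = Pi.single bb (1:F) := by
    intro bb
    funext b'
    by_cases hbb : b' = bb
    · subst hbb
      rw [Pi.single_eq_same]
      have := hc1 ↑b' b'.2
      rwa [Subtype.coe_eta] at this
    · rw [Pi.single_eq_of_ne hbb]
      exact hc0 ↑bb bb.2 b' (fun hh => hbb (Subtype.ext hh))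
  have htop : Submodule.span F b = ⊤ := by
    rw [eq_top_iff, ← (Pi.basisFun F ↥B₀).span_eq]
    apply Submodule.span_le.mpr
    rintro _ ⟨i, rfl⟩
    rw [Pi.basisFun_apply, ← hcunit i]
    exact hspan (mem_image_of_mem c (Or.inr i.2))
  have hbfin : b.Finite := by
    refine Set.Finite.subset ((hIf.image c).union (hBf.image c)) ?_
    intro w hw
    have := hbt hw
    rwa [image_union] at this
  haveI : Fintype ↥b := hbfin.fintype
  have hbbasis : Module.Basis ↥b F (↥B₀ → F) :=
    Module.Basis.mk hbli (by simpa using htop.ge)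
  have hbcard : b.ncard = B₀.ncard := by
    have h1 : Module.finrank F (↥B₀ → F) = Fintype.card ↥b :=
      Module.finrank_eq_card_basis hbbasis
    have h2 : Module.finrank F (↥B₀ → F) = Fintype.card ↥B₀ :=
      Module.finrank_fintype_fun_eq_card F
    rw [← Nat.card_coe_set_eq, Nat.card_eq_fintype_card, ← h1, h2,
      ← Nat.card_eq_fintype_card, Nat.card_coe_set_eq]
  -- choose preimages in B₀ for the new vectors
  set s : Set (↥B₀ → F) := b \ (c '' I) with hs
  have hb' : ∀ w : ↥s, ∃ a, a ∈ B₀ ∧ c a = ↑w := by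
    rintro ⟨w, hw⟩
    have hw2 : w ∈ c '' (I ∪ B₀) := hbt hw.1
    rw [image_union] at hw2
    rcases hw2 with hI | hB
    · exact absurd hI hw.2
    · obtain ⟨a, ha, rfl⟩ := hB
      exact ⟨a, ha, rfl⟩
  choose p hpB hpC using hb'
  set K : Set α := I ∪ Set.range p with hK
  have hcrange : c '' Set.range p = s := by
    rw [← Set.range_comp]
    have : (c ∘ p) = fun w : ↥s => (↑w : ↥B₀ → F) := funext fun w => hpC w
    rw [this, Subtype.range_coe]
  have hcK : c '' K = b := by
    rw [hK, image_union, hcrange, hs, union_diff_cancel hsb]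
  have hinjK : InjOn c K := by
    rintro x hx y hy hxy
    rcases hx with hx | hx
    · rcases hy with hy | hy
      · exact hinjI hx hy hxy
      · obtain ⟨w, rfl⟩ := hy
        exact absurd (show (↑w : ↥B₀ → F) ∈ c '' I from
          (hpC w ▸ hxy) ▸ mem_image_of_mem c hx) w.2.2
    · rcases hy with hy | hy
      · obtain ⟨w, rfl⟩ := hx
        exact absurd (show (↑w : ↥B₀ → F) ∈ c '' I from
          (hpC w ▸ hxy.symm) ▸ mem_image_of_mem c hy) w.2.2
      · obtain ⟨w, rfl⟩ := hx
        obtain ⟨w', rfl⟩ := hy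
        have : w = w' := Subtype.ext (by rw [← hpC w, ← hpC w', hxy])
        rw [this]
  have hKcard : K.ncard = B₀.ncard := by
    rw [← hbcard, ← hcK, Set.ncard_image_of_injOn hinjK]
  refine ⟨K, subset_union_left, ?_, hKcard, ?_⟩
  · refine union_subset subset_union_left ?_
    rintro x ⟨w, rfl⟩
    exact Or.inr (hpB w)
  · refine (linearIndepOn_iff_image hinjK).mpr ?_
    rw [hcK]
    exact hbli



end TutteAux
namespace TutteAux
open Matrix Function Set


theorem li_mapRange {F F' κ ι : Type*} [Field F] [Field F'] (e : F ≃+* F')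
    (v : κ → (ι →₀ F)) (h : LinearIndependent F v) :
    LinearIndependent F' (fun k => Finsupp.mapRange e (map_zero e) (v k)) := by
  rw [linearIndependent_iff'] at h ⊢
  intro s g hsum i hi
  have key : ∀ b : ι, ∑ j ∈ s, g j * e (v j b) = 0 := by
    intro b
    have := congrArg (fun w : ι →₀ F' => w b) hsum
    simpa [Finsupp.finset_sum_apply, Finsupp.mapRange_apply] using this
  have h2 : ∑ j ∈ s, (fun j => e.symm (g j)) j • v j = 0 := by
    ext b
    have hb := key b
    have := congrArg e.symm hb
    rw [map_sum] at this
    simpa [_root_.map_mul] using this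
  have := h s (fun j => e.symm (g j)) h2 i hi
  have := congrArg e this
  simpa using this

theorem rep_of_ringEquiv {α F F' : Type*} [Field F] [Field F'] {M : Matroid α}
    (e : F' ≃+* F) (h : M.IsRepresentableOver F') : M.IsRepresentableOver F := by
  obtain ⟨ι, φ, hφ⟩ := h
  refine ⟨ι, fun a => Finsupp.mapRange e (map_zero e) (φ a), fun I => ?_⟩
  rw [hφ I]
  refine and_congr_right fun hIE => ⟨fun h => li_mapRange e _ h, fun h => ?_⟩
  have h2 := li_mapRange e.symm _ h
  have hcomp : (fun x : I => Finsupp.mapRange ⇑e.symm (map_zero e.symm)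
      (Finsupp.mapRange ⇑e (map_zero e) (φ ↑x))) = fun x : I => φ ↑x := by
    funext x
    ext b
    simp [Finsupp.mapRange_apply]
  rwa [hcomp] at h2


theorem det_map_intCast {R : Type*} [CommRing R] {n : ℕ} (S : Matrix (Fin n) (Fin n) ℤ) :
    (S.map (Int.cast : ℤ → R)).det = ((S.det : ℤ) : R) := by
  rw [show (S.map (Int.cast : ℤ → R)) = (Int.castRingHom R).mapMatrix S from rfl,
    ← RingHom.map_det]
  rfl

theorem indep_iff_det {α F : Type*} [Field F] {M : Matroid α} {B₀ : Set α} (hBE : B₀ ⊆ M.E)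
    (hBf : B₀.Finite) {c : α → ↥B₀ → F} (hstd : Std M B₀ F c)
    {X Y : Set α} (hXB : X ⊆ B₀) (hYB : Disjoint Y B₀) (hYE : Y ⊆ M.E)
    [Fintype ↥X] [DecidableEq ↥X] (σ : ↥X ≃ ↥Y) :
    M.Indep ((B₀ \ X) ∪ Y) ↔
      (Matrix.of fun x x' : ↥X => c ↑(σ x') ⟨↑x, hXB x.2⟩).det ≠ 0 := by
  have hKE : (B₀ \ X) ∪ Y ⊆ M.E := union_subset (diff_subset.trans hBE) hYE
  rw [hstd.2.2 _ hKE]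
  exact lin_indep_iff_det hBf hstd.1 hstd.2.1 hXB hYB σ

theorem main_hard {α : Type*} (M : Matroid α) [M.Finite]
    (h2 : M.IsRepresentableOver (ZMod 2)) (h3 : M.IsRepresentableOver (ZMod 3))
    (F : Type*) [Field F] : M.IsRepresentableOver F := by
  classical
  obtain ⟨B₀, hB₀⟩ := M.exists_isBase
  have hEf : M.E.Finite := M.ground_finite
  have hBE : B₀ ⊆ M.E := hB₀.subset_ground
  have hBf : B₀.Finite := hEf.subset hBE
  haveI : Fintype ↥B₀ := hBf.fintype
  obtain ⟨c₂, hstd₂⟩ := exists_std h2 hB₀ hBf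
  obtain ⟨c₃, hstd₃⟩ := exists_std h3 hB₀ hBf
  -- lift of `ZMod 3` to signed integers, and the integer matrix `N`
  set lift : ZMod 3 → ℤ := fun z => if z = 0 then 0 else if z = 1 then 1 else -1 with hliftdef
  have hlift3 : ∀ z, ((lift z : ℤ) : ZMod 3) = z := by decide
  have hliftmem : ∀ z, lift z = 0 ∨ lift z = 1 ∨ lift z = -1 := by decide
  have hlift0 : ∀ z, lift z = 0 ↔ z = 0 := by decide
  have hlift1 : lift 1 = 1 := by decide
  set N : ↥B₀ → α → ℤ := fun b a => lift (c₃ a b) with hN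
  have one2 : (1 : ZMod 2) ≠ 0 := by decide
  have one3 : (1 : ZMod 3) ≠ 0 := by decide
  -- support matching between the two representations
  have hsupp : ∀ a ∈ M.E, ∀ b : ↥B₀, (c₂ a b = 0 ↔ c₃ a b = 0) := by
    intro a ha b
    by_cases haB : a ∈ B₀
    · by_cases hba : (↑b : α) = a
      · have hb : b = ⟨a, haB⟩ := Subtype.ext hba
        rw [hb, hstd₂.1 a haB, hstd₃.1 a haB]
        exact iff_of_false one2 one3
      · rw [hstd₂.2.1 a haB b hba, hstd₃.2.1 a haB b hba]
        exact iff_of_true rfl rfl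
    · -- 1×1 determinant criterion
      set X : Set α := {(↑b : α)} with hXdef
      set Y : Set α := {a} with hYdef
      haveI : Unique ↥X := Set.uniqueSingleton _
      haveI : Unique ↥Y := Set.uniqueSingleton _
      have hXB : X ⊆ B₀ := singleton_subset_iff.mpr b.2
      have hYB : Disjoint Y B₀ := disjoint_singleton_left.mpr haB
      have hYE : Y ⊆ M.E := singleton_subset_iff.mpr ha
      set σ : ↥X ≃ ↥Y := Equiv.ofUnique _ _ with hσ
      have i2 := indep_iff_det hBE hBf hstd₂ hXB hYB hYE σ
      have i3 := indep_iff_det hBE hBf hstd₃ hXB hYB hYE σ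
      have hdet2 : (Matrix.of fun x x' : ↥X => c₂ ↑(σ x') ⟨↑x, hXB x.2⟩).det = c₂ a b := by
        rw [det_unique]
        show c₂ ↑(σ default) ⟨↑(default : ↥X), hXB (default : ↥X).2⟩ = c₂ a b
        have e1 : (↑(σ default) : α) = a := (σ default).2
        have e2 : (⟨↑(default : ↥X), hXB (default : ↥X).2⟩ : ↥B₀) = b :=
          Subtype.ext ((default : ↥X).2 : (↑(default : ↥X) : α) ∈ {(↑b : α)})
        rw [e1, e2]
      have hdet3 : (Matrix.of fun x x' : ↥X => c₃ ↑(σ x') ⟨↑x, hXB x.2⟩).det = c₃ a b := by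
        rw [det_unique]
        show c₃ ↑(σ default) ⟨↑(default : ↥X), hXB (default : ↥X).2⟩ = c₃ a b
        have e1 : (↑(σ default) : α) = a := (σ default).2
        have e2 : (⟨↑(default : ↥X), hXB (default : ↥X).2⟩ : ↥B₀) = b :=
          Subtype.ext ((default : ↥X).2 : (↑(default : ↥X) : α) ∈ {(↑b : α)})
        rw [e1, e2]
      rw [hdet2] at i2
      rw [hdet3] at i3
      have := not_iff_not.mpr (i2.symm.trans i3)
      simpa [not_not] using this
  -- cast facts
  have hcast3 : ∀ (a : α) (b : ↥B₀), ((N b a : ℤ) : ZMod 3) = c₃ a b := fun a b => hlift3 _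
  have hcast2 : ∀ a ∈ M.E, ∀ b : ↥B₀, ((N b a : ℤ) : ZMod 2) = c₂ a b := by
    intro a ha b
    by_cases h0 : c₃ a b = 0
    · rw [hN]
      simp only []
      rw [(hlift0 _).mpr h0]
      rw [(hsupp a ha b).mpr h0]
      exact Int.cast_zero
    · have hne2 : c₂ a b ≠ 0 := fun hh => h0 ((hsupp a ha b).mp hh)
      have h2eq : c₂ a b = 1 := by
        revert hne2
        generalize c₂ a b = z
        revert z; decide
      rcases hliftmem (c₃ a b) with hl | hl | hl
      · exact absurd ((hlift0 _).mp hl) h0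
      · rw [hN]; simp only []; rw [hl, h2eq]; exact Int.cast_one
      · rw [hN]; simp only []; rw [hl, h2eq]; push_cast; decide
  -- divisibility transfer hypothesis for the TU argument
  have hH1 : ∀ (k : ℕ) (f : Fin k → ↥B₀) (g : Fin k → ↥(M.E \ B₀)),
      Injective f → Injective g →
      ((2:ℤ) ∣ (Matrix.of fun i j : Fin k => N (f i) ↑(g j)).det ↔
       (3:ℤ) ∣ (Matrix.of fun i j : Fin k => N (f i) ↑(g j)).det) := by
    intro k f g hf hg
    set X : Set α := (fun b : ↥B₀ => (b : α)) '' (Set.range f) with hXdef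
    set Y : Set α := (fun e : ↥(M.E \ B₀) => (e : α)) '' (Set.range g) with hYdef
    have hXB : X ⊆ B₀ := by rintro _ ⟨b, _, rfl⟩; exact b.2
    have hYE : Y ⊆ M.E := by rintro _ ⟨e, _, rfl⟩; exact e.2.1
    have hYB : Disjoint Y B₀ := disjoint_left.mpr (by rintro _ ⟨e, _, rfl⟩; exact e.2.2)
    set eX : Fin k ≃ ↥X := Equiv.ofBijective
      (fun i => ⟨↑(f i), mem_image_of_mem _ (mem_range_self i)⟩)
      ⟨fun i i' hii => hf (Subtype.ext (congrArg (Subtype.val : ↥X → α) hii)),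
        by rintro ⟨_, b, ⟨i, rfl⟩, rfl⟩; exact ⟨i, rfl⟩⟩ with heXd
    set eY : Fin k ≃ ↥Y := Equiv.ofBijective
      (fun i => ⟨↑(g i), mem_image_of_mem _ (mem_range_self i)⟩)
      ⟨fun i i' hii => hg (Subtype.ext (congrArg (Subtype.val : ↥Y → α) hii)),
        by rintro ⟨_, e, ⟨i, rfl⟩, rfl⟩; exact ⟨i, rfl⟩⟩ with heYd
    haveI : Fintype ↥X := Fintype.ofEquiv _ eX
    set σ : ↥X ≃ ↥Y := eX.symm.trans eY with hσ
    have i2 := indep_iff_det hBE hBf hstd₂ hXB hYB hYE σ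
    have i3 := indep_iff_det hBE hBf hstd₃ hXB hYB hYE σ
    set S : Matrix (Fin k) (Fin k) ℤ := Matrix.of fun i j : Fin k => N (f i) ↑(g j) with hS
    have hsub2 : (Matrix.of fun x x' : ↥X => c₂ ↑(σ x') ⟨↑x, hXB x.2⟩).submatrix ⇑eX ⇑eX
        = S.map (Int.cast : ℤ → ZMod 2) := by
      ext i jj
      show c₂ ↑(σ (eX jj)) ⟨↑(eX i), hXB (eX i).2⟩ = ((S i jj : ℤ) : ZMod 2)
      have e1 : σ (eX jj) = eY jj := by rw [hσ]; simp
      have e2 : (⟨↑(eX i), hXB (eX i).2⟩ : ↥B₀) = f i := Subtype.ext rfl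
      rw [e1, e2]
      exact (hcast2 ↑(g jj) (g jj).2.1 (f i)).symm
    have hsub3 : (Matrix.of fun x x' : ↥X => c₃ ↑(σ x') ⟨↑x, hXB x.2⟩).submatrix ⇑eX ⇑eX
        = S.map (Int.cast : ℤ → ZMod 3) := by
      ext i jj
      show c₃ ↑(σ (eX jj)) ⟨↑(eX i), hXB (eX i).2⟩ = ((S i jj : ℤ) : ZMod 3)
      have e1 : σ (eX jj) = eY jj := by rw [hσ]; simp
      have e2 : (⟨↑(eX i), hXB (eX i).2⟩ : ↥B₀) = f i := Subtype.ext rfl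
      rw [e1, e2]
      exact (hcast3 ↑(g jj) (f i)).symm
    have hd2 : (Matrix.of fun x x' : ↥X => c₂ ↑(σ x') ⟨↑x, hXB x.2⟩).det
        = ((S.det : ℤ) : ZMod 2) := by
      rw [← det_submatrix_equiv_self eX, hsub2]
      exact det_map_intCast S
    have hd3 : (Matrix.of fun x x' : ↥X => c₃ ↑(σ x') ⟨↑x, hXB x.2⟩).det
        = ((S.det : ℤ) : ZMod 3) := by
      rw [← det_submatrix_equiv_self eX, hsub3]
      exact det_map_intCast S
    rw [hd2] at i2
    rw [hd3] at i3
    have dv2 : ((S.det : ℤ) : ZMod 2) = 0 ↔ (2:ℤ) ∣ S.det := by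
      rw [ZMod.intCast_zmod_eq_zero_iff_dvd]
      norm_num
    have dv3 : ((S.det : ℤ) : ZMod 3) = 0 ↔ (3:ℤ) ∣ S.det := by
      rw [ZMod.intCast_zmod_eq_zero_iff_dvd]
      norm_num
    rw [show ((2:ℤ) ∣ (Matrix.of fun i j : Fin k => N (f i) ↑(g j)).det) = ((2:ℤ) ∣ S.det)
      from rfl, show ((3:ℤ) ∣ (Matrix.of fun i j : Fin k => N (f i) ↑(g j)).det)
      = ((3:ℤ) ∣ S.det) from rfl, ← dv2, ← dv3]
    have := not_iff_not.mpr (i2.symm.trans i3)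
    simpa [not_not] using this
  -- total unimodularity of all relevant square submatrices
  have hTU : ∀ (k : ℕ) (f : Fin k → ↥B₀) (g : Fin k → ↥(M.E \ B₀)),
      Injective f → Injective g →
      ((Matrix.of fun i j : Fin k => N (f i) ↑(g j)).det = 0 ∨
       (Matrix.of fun i j : Fin k => N (f i) ↑(g j)).det = 1 ∨
       (Matrix.of fun i j : Fin k => N (f i) ↑(g j)).det = -1) := by
    intro k f g hf hg
    refine tu_main k _ (fun i j => hliftmem _) ?_
    intro j f' g' hf' hg'
    have hss : (Matrix.of fun i j : Fin k => N (f i) ↑(g j)).submatrix f' g'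
        = Matrix.of fun p q : Fin j => N ((f ∘ f') p) ↑((g ∘ g') q) := rfl
    rw [hss]
    exact hH1 j (f ∘ f') (g ∘ g') (hf.comp hf') (hg.comp hg')
  -- the candidate representation over F
  set cF : α → ↥B₀ → F := fun a b => ((N b a : ℤ) : F) with hcF
  have hc1F : ∀ (a : α) (ha : a ∈ B₀), cF a ⟨a, ha⟩ = 1 := by
    intro a ha
    rw [hcF]
    simp only []
    rw [hN]
    simp only []
    rw [hstd₃.1 a ha, hlift1]
    exact Int.cast_one
  have hc0F : ∀ (a : α), a ∈ B₀ → ∀ (b' : ↥B₀), (↑b' : α) ≠ a → cF a b' = 0 := by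
    intro a ha b' hb'
    rw [hcF]
    simp only []
    rw [hN]
    simp only []
    rw [hstd₃.2.1 a ha b' hb', (hlift0 0).mpr rfl]
    exact Int.cast_zero
  -- the key criterion for sets of full size
  have hKcrit : ∀ K : Set α, K ⊆ M.E → K.ncard = B₀.ncard →
      (M.Indep K ↔ LinearIndependent F (fun x : ↥K => cF ↑x)) := by
    intro K hKE hKcard
    have hKf : K.Finite := hEf.subset hKE
    set X : Set α := B₀ \ K with hXdef
    set Y : Set α := K \ B₀ with hYdef
    have hXB : X ⊆ B₀ := diff_subset
    have hYB : Disjoint Y B₀ := disjoint_left.mpr fun a ha => ha.2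
    have hYE : Y ⊆ M.E := fun a ha => hKE ha.1
    have hXf : X.Finite := hBf.subset hXB
    have hYf : Y.Finite := hKf.subset diff_subset
    haveI : Fintype ↥X := hXf.fintype
    haveI : Fintype ↥Y := hYf.fintype
    have hdisj1 : Disjoint (B₀ ∩ K) X := disjoint_left.mpr fun a ha hx => hx.2 ha.2
    have hdisj2 : Disjoint (K ∩ B₀) Y := disjoint_left.mpr fun a ha hy => hy.2 ha.2
    have hXY : X.ncard = Y.ncard := by
      have h1 : (B₀ ∩ K).ncard + X.ncard = B₀.ncard := by
        rw [← Set.ncard_union_eq hdisj1 (hBf.subset inter_subset_left) hXf,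
          inter_union_diff]
      have h2 : (K ∩ B₀).ncard + Y.ncard = K.ncard := by
        rw [← Set.ncard_union_eq hdisj2 (hKf.subset inter_subset_left) hYf,
          inter_union_diff]
      have h3 : (B₀ ∩ K).ncard = (K ∩ B₀).ncard := by rw [inter_comm]
      omega
    have hcardXY : Fintype.card ↥X = Fintype.card ↥Y := by
      rw [← Nat.card_eq_fintype_card, ← Nat.card_eq_fintype_card,
        Nat.card_coe_set_eq, Nat.card_coe_set_eq, hXY]
    set σ : ↥X ≃ ↥Y := Fintype.equivOfCardEq hcardXY with hσ
    have hKdec : (B₀ \ X) ∪ Y = K := by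
      ext a
      simp only [hXdef, hYdef, mem_union, mem_diff]
      constructor
      · rintro (⟨haB, ha⟩ | ⟨haK, _⟩)
        · by_contra haK
          exact ha ⟨haB, haK⟩
        · exact haK
      · intro haK
        by_cases haB : a ∈ B₀
        · exact Or.inl ⟨haB, fun hx => hx.2 haK⟩
        · exact Or.inr ⟨haK, haB⟩
    have i3 := indep_iff_det hBE hBf hstd₃ hXB hYB hYE σ
    have iF := lin_indep_iff_det hBf hc1F hc0F hXB hYB σ
    rw [hKdec] at i3 iF
    -- the integer determinant
    set n : ℕ := Fintype.card ↥X with hn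
    set eqX : ↥X ≃ Fin n := Fintype.equivFin ↥X with heqX
    set f : Fin n → ↥B₀ := fun i => ⟨↑(eqX.symm i), hXB (eqX.symm i).2⟩ with hf
    set g : Fin n → ↥(M.E \ B₀) :=
      fun i => ⟨↑(σ (eqX.symm i)), ⟨hKE (σ (eqX.symm i)).2.1, (σ (eqX.symm i)).2.2⟩⟩ with hg
    have hfinj : Injective f := by
      intro i i' hii
      have h1 : (↑(eqX.symm i) : α) = ↑(eqX.symm i') :=
        congrArg (Subtype.val : ↥B₀ → α) hii
      exact eqX.symm.injective (Subtype.ext h1)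
    have hginj : Injective g := by
      intro i i' hii
      have h1 : (↑(σ (eqX.symm i)) : α) = ↑(σ (eqX.symm i')) :=
        congrArg (Subtype.val : ↥(M.E \ B₀) → α) hii
      have h2 := σ.injective (Subtype.ext h1)
      exact eqX.symm.injective h2
    set S : Matrix (Fin n) (Fin n) ℤ := Matrix.of fun i j : Fin n => N (f i) ↑(g j) with hS
    have hsub3 : (Matrix.of fun x x' : ↥X => c₃ ↑(σ x') ⟨↑x, hXB x.2⟩).submatrix
        ⇑eqX.symm ⇑eqX.symm = S.map (Int.cast : ℤ → ZMod 3) := by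
      ext i jj
      show c₃ ↑(σ (eqX.symm jj)) ⟨↑(eqX.symm i), hXB (eqX.symm i).2⟩ = ((S i jj : ℤ) : ZMod 3)
      exact (hcast3 ↑(g jj) (f i)).symm
    have hsubF : (Matrix.of fun x x' : ↥X => cF ↑(σ x') ⟨↑x, hXB x.2⟩).submatrix
        ⇑eqX.symm ⇑eqX.symm = S.map (Int.cast : ℤ → F) := by
      ext i jj
      rfl
    have hd3 : (Matrix.of fun x x' : ↥X => c₃ ↑(σ x') ⟨↑x, hXB x.2⟩).det
        = ((S.det : ℤ) : ZMod 3) := by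
      rw [← det_submatrix_equiv_self eqX.symm, hsub3]
      exact det_map_intCast S
    have hdF : (Matrix.of fun x x' : ↥X => cF ↑(σ x') ⟨↑x, hXB x.2⟩).det
        = ((S.det : ℤ) : F) := by
      rw [← det_submatrix_equiv_self eqX.symm, hsubF]
      exact det_map_intCast S
    rw [hd3] at i3
    rw [hdF] at iF
    rw [i3, iF]
    rcases hTU n f g hfinj hginj with h | h | h
    · have h' : S.det = 0 := h
      rw [h']
      simp
    · have h' : S.det = 1 := h
      rw [h']
      simp only [Int.cast_one]
      constructor <;> intro <;> exact one_ne_zero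
    · have h' : S.det = -1 := h
      rw [h']
      simp only [Int.cast_neg, Int.cast_one]
      have hzm : (-1 : ZMod 3) ≠ 0 := by decide
      have hF : (-1 : F) ≠ 0 := neg_ne_zero.mpr one_ne_zero
      constructor <;> intro <;> assumption
  -- conclude
  apply rep_of_std hBf
  refine ⟨hc1F, hc0F, ?_⟩
  intro I hIE
  constructor
  · intro hI
    obtain ⟨K, hK, hIK, hKsub⟩ := hI.exists_isBase_subset_union_isBase hB₀
    have hKi := (hKcrit K hK.subset_ground (hK.ncard_eq_ncard_of_isBase hB₀)).mp hK.indep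
    have hfam : (fun x : ↥I => cF ↑x) = (fun x : ↥K => cF ↑x) ∘ (Set.inclusion hIK) := rfl
    rw [hfam]
    exact hKi.comp _ (Set.inclusion_injective hIK)
  · intro hLI
    obtain ⟨K, hIK, hKsub, hKcard, hKLI⟩ := extend_lin hBf hc1F hc0F (hEf.subset hIE) hLI
    have hKE : K ⊆ M.E := hKsub.trans (union_subset hIE hBE)
    exact ((hKcrit K hKE hKcard).mpr hKLI).subset hIK

end TutteAux


/-- Tutte's theorem: a finite matroid is regular (representable over every field)
if and only if it is binary and ternary. -/
theorem regular_iff_binary_and_ternary {α : Type*} (M : Matroid α) [M.Finite] :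
    (∀ (F : Type*) [Field F], M.IsRepresentableOver F) ↔
      (M.IsRepresentableOver (ZMod 2) ∧ M.IsRepresentableOver (ZMod 3)) := by
  constructor
  · intro h
    exact ⟨TutteAux.rep_of_ringEquiv (ULift.ringEquiv) (h (ULift (ZMod 2))),
      TutteAux.rep_of_ringEquiv (ULift.ringEquiv) (h (ULift (ZMod 3)))⟩
  · rintro ⟨h2, h3⟩ F _
    exact TutteAux.main_hard M h2 h3 F
end
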